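/- arXiv:math/0012246 — 7 statements merged into one kernel-verified Lean document; each statement's English description precedes it below -/
import Mathlib

section
/- Every (n-2)-filiform complex nilpotent Lie algebra of dimension n is isomorphic to the direct sum of a Heisenberg Lie algebra H_{2p+1} (of dimension 2p+1 for some p ≥ 1) and an abelian Lie algebra. -/
/-!
For `X` outside the derived algebra, `ad X` has rank at most one and squares to zero. Comparing
`2 × 2` minors along the pencil `X + t • Y` shows that all these rank-one maps have the same
image, a line `K ∙ Z`, and `ad Y ^ 2 = 0` then forces `Z` to be central. The bracket is
therefore `⁅A, B⁆ = ω A B • Z` for the alternating form `ω = ℓ ∘ ⁅·, ·⁆`, where `ℓ Z = 1`, and a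
Darboux basis of `ω` on a complement of `K ∙ Z`, completed by `Z`, is a Heisenberg basis.
-/

open Module Submodule Set

section LinearAlgebra

variable {K V W : Type*} [Field K] [AddCommGroup V] [Module K V] [AddCommGroup W] [Module K W]

section Biorthogonal

variable {ι : Type*} [Fintype ι] [DecidableEq ι] {v : ι → V} {φ : ι → Dual K V}

theorem apply_sum_smul_of_biorthogonal (h : ∀ i j, φ i (v j) = if i = j then 1 else 0)
    (c : ι → K) (i : ι) : φ i (∑ j, c j • v j) = c i := by
  simp [h]

theorem linearIndependent_of_biorthogonal (h : ∀ i j, φ i (v j) = if i = j then 1 else 0) :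
    LinearIndependent K v :=
  Fintype.linearIndependent_iff.mpr fun c hc i => by
    simpa [hc] using (apply_sum_smul_of_biorthogonal h c i).symm

theorem isCompl_span_range_iInf_ker_of_biorthogonal
    (h : ∀ i j, φ i (v j) = if i = j then 1 else 0) :
    IsCompl (span K (range v)) (⨅ i, LinearMap.ker (φ i)) := by
  have hcoord := apply_sum_smul_of_biorthogonal h
  constructor
  · rw [disjoint_def]
    intro w hw hker
    obtain ⟨c, rfl⟩ := (mem_span_range_iff_exists_fun K).mp hw
    have hc : c = 0 := funext fun i => by
      simpa [hcoord] using (mem_iInf _).mp hker i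
    simp [hc]
  · rw [codisjoint_iff, eq_top_iff]
    rintro w -
    have hproj : w - ∑ j, φ j w • v j ∈ ⨅ i, LinearMap.ker (φ i) :=
      (mem_iInf _).mpr fun i => by simp [hcoord]
    rw [← add_sub_cancel (∑ j, φ j w • v j) w]
    exact add_mem_sup (sum_mem fun j _ => smul_mem _ _ (subset_span ⟨j, rfl⟩)) hproj

end Biorthogonal

theorem exists_basis_sum_of_isCompl {ι κ : Type*} {P Q : Submodule K V} (h : IsCompl P Q)
    (bP : Basis ι K P) (bQ : Basis κ K Q) :
    ∃ b : Basis (ι ⊕ κ) K V, (∀ i, b (.inl i) = bP i) ∧ ∀ j, b (.inr j) = bQ j :=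
  ⟨(bP.prod bQ).map (prodEquivOfIsCompl _ _ h), fun i => by simp, fun j => by simp⟩

theorem LinearMap.mem_span_singleton_of_finrank_range_le_one [FiniteDimensional K W]
    {f : V →ₗ[K] W} (hf : finrank K (range f) ≤ 1) {v : V} (hv : f v ≠ 0) (u : V) :
    f u ∈ K ∙ f v := by
  have hle : K ∙ f v ≤ range f := span_le.mpr (by simp)
  have heq := Submodule.eq_of_le_of_finrank_le hle (by rwa [finrank_span_singleton hv])
  exact heq ▸ mem_range_self f u

theorem LinearMap.mul_eq_mul_of_finrank_range_le_one [FiniteDimensional K W]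
    {f : V →ₗ[K] W} (hf : finrank K (range f) ≤ 1) {z w : W} (hzw : LinearIndependent K ![z, w])
    {u v : V} {α β γ δ : K} (hu : f u = α • z + β • w) (hv : f v = γ • z + δ • w) :
    α * δ = β * γ := by
  by_cases hu0 : f u = 0
  · obtain ⟨rfl, rfl⟩ := LinearIndependent.pair_iff.mp hzw α β (hu ▸ hu0)
    simp
  obtain ⟨c, hc⟩ := mem_span_singleton.mp (mem_span_singleton_of_finrank_range_le_one hf hu0 v)
  rw [hu, hv] at hc
  obtain ⟨hγ, hδ⟩ := LinearIndependent.pair_iff.mp hzw (c * α - γ) (c * β - δ) (by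
    rw [← sub_eq_zero] at hc
    rw [← hc]
    module)
  linear_combination β * hγ - α * hδ

theorem Submodule.exists_add_smul_notMem {p : Submodule K V} {x : V} (hx : x ∉ p) (y : V) :
    ∃ s : K, y + s • x ∉ p := by
  by_cases hy : y ∈ p
  · exact ⟨1, by rwa [one_smul, p.add_mem_iff_right hy]⟩
  · exact ⟨0, by rwa [zero_smul, add_zero]⟩

theorem Submodule.exists_ne_zero_add_smul_notMem [NeZero (2 : K)] {p : Submodule K V} {x : V}
    (hx : x ∉ p) (y : V) : ∃ t : K, t ≠ 0 ∧ x + t • y ∉ p := by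
  by_cases h : x + y ∈ p
  · refine ⟨2, two_ne_zero, fun h2 => hx ?_⟩
    rw [show x = (2 : K) • (x + y) - (x + (2 : K) • y) by module]
    exact p.sub_mem (p.smul_mem _ h) h2
  · exact ⟨1, one_ne_zero, by rwa [one_smul]⟩

end LinearAlgebra

namespace LinearMap

variable {K V : Type*} [Field K] [AddCommGroup V] [Module K V]

structure IsDarbouxBasis {ι κ : Type*} (ω : V →ₗ[K] V →ₗ[K] K) (b : Basis (ι ⊕ ι ⊕ κ) K V) :
    Prop where
  apply_fst_snd_self : ∀ i, ω (b (.inl i)) (b (.inr (.inl i))) = 1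
  apply_fst_snd_of_ne : ∀ i j, i ≠ j → ω (b (.inl i)) (b (.inr (.inl j))) = 0
  apply_fst_fst : ∀ i j, ω (b (.inl i)) (b (.inl j)) = 0
  apply_snd_snd : ∀ i j, ω (b (.inr (.inl i))) (b (.inr (.inl j))) = 0
  apply_radical : ∀ v k, ω v (b (.inr (.inr k))) = 0

variable {ω : V →ₗ[K] V →ₗ[K] K}

theorem IsAlt.linearIndependent_and_isCompl_of_apply_eq_one (hω : ω.IsAlt) {x y : V} (hxy : ω x y = 1) :
    LinearIndependent K (Sum.elim (fun _ : Unit => x) (fun _ : Unit => y)) ∧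
      IsCompl (span K (Set.range (Sum.elim (fun _ : Unit => x) (fun _ : Unit => y))))
        (ker (ω x) ⊓ ker (ω y)) := by
  have hyx : ω y x = -1 := by rw [← hω.neg, hxy]
  have hdual : ∀ i j, (Sum.elim (fun _ : Unit => -ω y) (fun _ : Unit => ω x) i)
      (Sum.elim (fun _ : Unit => x) (fun _ : Unit => y) j) = if i = j then 1 else 0 := by
    rintro (⟨⟩ | ⟨⟩) (⟨⟩ | ⟨⟩) <;> simp [hxy, hyx, hω.self_eq_zero]
  refine ⟨linearIndependent_of_biorthogonal hdual, ?_⟩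
  convert isCompl_span_range_iInf_ker_of_biorthogonal hdual using 1
  simp [iInf_sum, inf_comm]

theorem IsAlt.exists_isDarbouxBasis_of_apply_eq_one (hω : ω.IsAlt) {x y : V} (hxy : ω x y = 1)
    {ι κ : Type*} {b' : Basis (ι ⊕ ι ⊕ κ) K (ker (ω x) ⊓ ker (ω y) : Submodule K V)}
    (hb' : (ω.compl₁₂ (Submodule.subtype _) (Submodule.subtype _)).IsDarbouxBasis b') :
    ∃ b : Basis ((Unit ⊕ ι) ⊕ (Unit ⊕ ι) ⊕ κ) K V, ω.IsDarbouxBasis b := by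
  obtain ⟨hli, hcompl⟩ := hω.linearIndependent_and_isCompl_of_apply_eq_one hxy
  obtain ⟨b₀, hb₀l, hb₀r⟩ := exists_basis_sum_of_isCompl hcompl (Basis.span hli) b'
  have hx : ∀ j, ω x (b' j) = 0 := fun j => (b' j).2.1
  have hy : ∀ j, ω y (b' j) = 0 := fun j => (b' j).2.2
  have hx' : ∀ j, ω (b' j) x = 0 := fun j => hω.eq_iff.mp (hx j)
  have hy' : ∀ j, ω (b' j) y = 0 := fun j => hω.eq_iff.mp (hy j)
  have hself : ∀ i, ω (b' (.inl i)) (b' (.inr (.inl i))) = 1 := hb'.apply_fst_snd_self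
  have hne : ∀ i j, i ≠ j → ω (b' (.inl i)) (b' (.inr (.inl j))) = 0 := hb'.apply_fst_snd_of_ne
  have hfst : ∀ i j, ω (b' (.inl i)) (b' (.inl j)) = 0 := hb'.apply_fst_fst
  have hsnd : ∀ i j, ω (b' (.inr (.inl i))) (b' (.inr (.inl j))) = 0 := hb'.apply_snd_snd
  let e := (Equiv.sumSumSumComm Unit Unit ι (ι ⊕ κ)).trans
    (Equiv.sumCongr (Equiv.refl _) (Equiv.sumAssoc Unit ι κ).symm)
  refine ⟨b₀.reindex e, ?_, ?_, ?_, ?_, ?_⟩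
  · rintro (⟨⟩ | i) <;> simp [e, hb₀l, hb₀r, Basis.span_apply, hxy, hself]
  · rintro (⟨⟩ | i) (⟨⟩ | j) hij <;> simp [e, hb₀l, hb₀r, Basis.span_apply, hx, hy'] at hij ⊢
    exact hne i j hij
  · rintro (⟨⟩ | i) (⟨⟩ | j) <;>
      simp [e, hb₀l, hb₀r, Basis.span_apply, hx, hx', hω.self_eq_zero, hfst]
  · rintro (⟨⟩ | i) (⟨⟩ | j) <;>
      simp [e, hb₀l, hb₀r, Basis.span_apply, hy, hy', hω.self_eq_zero, hsnd]
  · intro v k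
    have hker : ⊤ ≤ ker (ω.flip (b' (.inr (.inr k)))) := by
      rw [← hcompl.sup_eq_top]
      refine sup_le (span_le.mpr ?_) fun u hu => hb'.apply_radical ⟨u, hu⟩ k
      rintro _ ⟨⟨⟩ | ⟨⟩, rfl⟩
      exacts [hx _, hy _]
    simpa [e, hb₀r] using hker (mem_top (x := v))

theorem IsAlt.exists_isDarbouxBasis [FiniteDimensional K V] (hω : ω.IsAlt) :
    ∃ (ι κ : Type) (_ : Fintype ι) (_ : Fintype κ) (b : Basis (ι ⊕ ι ⊕ κ) K V),
      ω.IsDarbouxBasis b := by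
  induction hn : finrank K V using Nat.strong_induction_on generalizing V with
  | _ n ih =>
  by_cases h0 : ω = 0
  · subst h0
    refine ⟨Empty, Fin n, inferInstance, inferInstance, (finBasisOfFinrankEq K V hn).reindex
      ((Equiv.emptySum Empty _).trans (Equiv.emptySum Empty _)).symm, ?_⟩
    constructor <;> simp
  obtain ⟨x, y, hxy⟩ : ∃ x y, ω x y = 1 := by
    obtain ⟨x, y, hxy⟩ : ∃ x y, ω x y ≠ 0 := by
      by_contra! h
      exact h0 (LinearMap.ext₂ h)
    exact ⟨x, (ω x y)⁻¹ • y, by simp [hxy]⟩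
  have hx : x ∉ ker (ω x) ⊓ ker (ω y) := fun h => by
    have hyx : ω y x = 0 := h.2
    rw [← hω.neg, hxy] at hyx
    exact one_ne_zero (neg_eq_zero.mp hyx)
  have hlt : finrank K ↥(ker (ω x) ⊓ ker (ω y)) < n := by
    refine hn ▸ Submodule.finrank_lt fun h => hx ?_
    rw [h]
    exact mem_top
  obtain ⟨ι, κ, _, _, b', hb'⟩ := ih _ hlt
    (ω := ω.compl₁₂ (Submodule.subtype _) (Submodule.subtype _)) (fun v => hω v) rfl
  obtain ⟨b, hb⟩ := hω.exists_isDarbouxBasis_of_apply_eq_one hxy hb'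
  exact ⟨Unit ⊕ ι, κ, inferInstance, inferInstance, b, hb⟩

end LinearMap

namespace LieAlgebra

variable {K L : Type*} [Field K] [LieRing L] [LieAlgebra K L] {D : Submodule K L} {X U : L}

theorem lie_mem_span_singleton_of_notMem [FiniteDimensional K L] [NeZero (2 : K)]
    (hrank : ∀ E ∉ D, finrank K (LinearMap.range (ad K L E)) ≤ 1) (hX : X ∉ D)
    (hXU : ⁅X, U⁆ ≠ 0) {Y : L} (hY : Y ∉ D) (v : L) : ⁅Y, v⁆ ∈ K ∙ ⁅X, U⁆ := by
  by_contra hW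
  have hW0 : ad K L Y v ≠ 0 := fun h => hW (by simp_all)
  have hZW : LinearIndependent K ![⁅X, U⁆, ⁅Y, v⁆] :=
    (LinearIndependent.pair_iff' hXU).mpr fun a h => hW (mem_span_singleton.mpr ⟨a, h⟩)
  have hmem : ∀ {E w : L} (hE : E ∉ D) (hw : ad K L E w ≠ 0) (u : L),
      ∃ a : K, ⁅E, u⁆ = a • ⁅E, w⁆ := fun hE hw u =>
    (mem_span_singleton.mp (LinearMap.mem_span_singleton_of_finrank_range_le_one
      (hrank _ hE) hw u)).imp fun _ h => h.symm
  obtain ⟨a, ha⟩ := hmem hY hW0 U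
  obtain ⟨b, hb⟩ := hmem hX hXU v
  obtain ⟨c, hc⟩ := hmem hX hXU Y
  -- Rank one forces both the minor `t * (1 - a * b)` of `ad (X + t • Y)` on `U, v` and the
  -- minor `a` of `ad (U + s • X)` on `X, Y` to vanish.
  obtain ⟨t, ht, hE⟩ := exists_ne_zero_add_smul_notMem hX Y
  have hab : a * b = 1 := by
    have := LinearMap.mul_eq_mul_of_finrank_range_le_one (hrank _ hE) hZW
      (u := U) (v := v) (α := 1) (β := t * a) (γ := b) (δ := t)
      (by simp [ha, smul_smul]) (by simp [hb])
    exact mul_left_cancel₀ ht (by linear_combination -this)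
  obtain ⟨s, hs⟩ := exists_add_smul_notMem hX U
  have hUX : ⁅U, X⁆ = -⁅X, U⁆ := (lie_skew U X).symm
  have hUY : ⁅U, Y⁆ = -(a • ⁅Y, v⁆) := by rw [← lie_skew, ha]
  have := LinearMap.mul_eq_mul_of_finrank_range_le_one (hrank _ hs) hZW
    (u := X) (v := Y) (α := -1) (β := 0) (γ := s * c) (δ := -a)
    (by simp only [ad_apply, add_lie, smul_lie, lie_self, hUX]; module)
    (by simp only [ad_apply, add_lie, smul_lie, hUY, hc]; module)
  exact one_ne_zero (by linear_combination -hab + b * this)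

theorem lie_mem_span_singleton [FiniteDimensional K L] [NeZero (2 : K)]
    (hrank : ∀ E ∉ D, finrank K (LinearMap.range (ad K L E)) ≤ 1) (hX : X ∉ D)
    (hXU : ⁅X, U⁆ ≠ 0) (A B : L) : ⁅A, B⁆ ∈ K ∙ ⁅X, U⁆ := by
  by_cases hA : A ∈ D
  · have hXA : X + A ∉ D := fun h => hX ((D.add_mem_iff_left hA).mp h)
    rw [show ⁅A, B⁆ = ⁅X + A, B⁆ - ⁅X, B⁆ by rw [add_lie, add_sub_cancel_left]]
    exact sub_mem (lie_mem_span_singleton_of_notMem hrank hX hXU hXA B)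
      (lie_mem_span_singleton_of_notMem hrank hX hXU hX B)
  · exact lie_mem_span_singleton_of_notMem hrank hX hXU hA B

theorem lie_eq_zero_of_lie_mem_span_singleton (hsq : ∀ E ∉ D, ad K L E ^ 2 = 0) (hX : X ∉ D)
    {Z : L} (hZ : ∀ A : L, ⁅A, Z⁆ ∈ K ∙ Z) (A : L) : ⁅A, Z⁆ = 0 := by
  have key : ∀ E ∉ D, ⁅E, Z⁆ = 0 := fun E hE => by
    obtain ⟨c, hc⟩ := mem_span_singleton.mp (hZ E)
    have h2 : ⁅E, ⁅E, Z⁆⁆ = 0 := by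
      simpa [sq] using LinearMap.congr_fun (hsq E hE) Z
    rw [← hc, lie_smul, ← hc, smul_smul, ← sq, smul_eq_zero] at h2
    rcases h2 with h | h
    · rw [← hc, pow_eq_zero_iff two_ne_zero |>.mp h, zero_smul]
    · rw [← hc, h, smul_zero]
  by_cases hA : A ∈ D
  · simpa [add_lie, key X hX] using key (X + A) fun h => hX ((D.add_mem_iff_left hA).mp h)
  · exact key A hA

structure IsHeisenbergBasis {p q : ℕ} (b : Module.Basis (Fin p ⊕ Fin p ⊕ Unit ⊕ Fin q) K L) :
    Prop where
  lie_x_y : ∀ i, ⁅b (.inl i), b (.inr (.inl i))⁆ = b (.inr (.inr (.inl ())))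
  lie_x_y_of_ne : ∀ i j, i ≠ j → ⁅b (.inl i), b (.inr (.inl j))⁆ = 0
  lie_x_x : ∀ i j, ⁅b (.inl i), b (.inl j)⁆ = 0
  lie_y_y : ∀ i j, ⁅b (.inr (.inl i)), b (.inr (.inl j))⁆ = 0
  lie_x_z : ∀ i, ⁅b (.inl i), b (.inr (.inr (.inl ())))⁆ = 0
  lie_y_z : ∀ i, ⁅b (.inr (.inl i)), b (.inr (.inr (.inl ())))⁆ = 0
  lie_w : ∀ (x : L) k, ⁅x, b (.inr (.inr (.inr k)))⁆ = 0

theorem exists_dual_lie_eq_smul {Z : L} (hZ : Z ≠ 0) (hspan : ∀ A B : L, ⁅A, B⁆ ∈ K ∙ Z) :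
    ∃ ℓ : Dual K L, ∀ A B : L, ⁅A, B⁆ = ℓ ⁅A, B⁆ • Z := by
  obtain ⟨ℓ, hℓ⟩ := Module.Projective.exists_dual_eq_one K hZ
  refine ⟨ℓ, fun A B => ?_⟩
  obtain ⟨c, hc⟩ := mem_span_singleton.mp (hspan A B)
  rw [← hc]
  simp [hℓ]

theorem exists_isHeisenbergBasis [FiniteDimensional K L] {Z : L} (hZ : Z ≠ 0)
    (hcent : ∀ A : L, ⁅A, Z⁆ = 0) (hspan : ∀ A B : L, ⁅A, B⁆ ∈ K ∙ Z) :
    ∃ (p q : ℕ) (b : Module.Basis (Fin p ⊕ Fin p ⊕ Unit ⊕ Fin q) K L), IsHeisenbergBasis b := by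
  obtain ⟨ℓ, hlie⟩ := exists_dual_lie_eq_smul hZ hspan
  obtain ⟨C, hC⟩ := (span K (Set.range fun _ : Unit => Z)).exists_isCompl
  let ω : C →ₗ[K] C →ₗ[K] K :=
    ((ad K L : L →ₗ[K] Module.End K L).compr₂ ℓ).compl₁₂ C.subtype C.subtype
  have hω : ∀ c c' : C, ⁅(c : L), (c' : L)⁆ = ω c c' • Z := fun c c' => hlie c c'
  obtain ⟨ι, κ, _, _, b', hb'⟩ := LinearMap.IsAlt.exists_isDarbouxBasis (ω := ω)
    fun c => by simp [ω]
  obtain ⟨b₀, hb₀l, hb₀r⟩ := exists_basis_sum_of_isCompl hC.symm b'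
    (Basis.span (linearIndependent_unique_iff.mpr hZ))
  let e : (ι ⊕ ι ⊕ κ) ⊕ Unit ≃
      Fin (Fintype.card ι) ⊕ Fin (Fintype.card ι) ⊕ Unit ⊕ Fin (Fintype.card κ) :=
    (Equiv.sumAssoc _ _ _).trans ((Equiv.sumCongr (Equiv.refl _) (Equiv.sumAssoc _ _ _)).trans
      (Equiv.sumCongr (Fintype.equivFin ι) (Equiv.sumCongr (Fintype.equivFin ι)
        ((Equiv.sumComm _ _).trans (Equiv.sumCongr (Equiv.refl _) (Fintype.equivFin κ))))))
  refine ⟨_, _, b₀.reindex e, ⟨?_, ?_, ?_, ?_, ?_, ?_, ?_⟩⟩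
  · intro i
    simp [e, hb₀l, hb₀r, Basis.span_apply, hω, hb'.apply_fst_snd_self]
  · intro i j hij
    simp [e, hb₀l, hω, hb'.apply_fst_snd_of_ne _ _ ((Fintype.equivFin ι).symm.injective.ne hij)]
  · intro i j
    simp [e, hb₀l, hω, hb'.apply_fst_fst]
  · intro i j
    simp [e, hb₀l, hω, hb'.apply_snd_snd]
  · intro i
    simp [e, hb₀r, Basis.span_apply, hcent]
  · intro i
    simp [e, hb₀r, Basis.span_apply, hcent]
  · intro x k
    set w : C := b' (.inr (.inr ((Fintype.equivFin κ).symm k)))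
    have hker : ⊤ ≤ LinearMap.ker ((ad K L : L →ₗ[K] Module.End K L).flip w) := by
      rw [← hC.sup_eq_top]
      refine sup_le (span_le.mpr ?_) fun c hc => ?_
      · rintro _ ⟨⟨⟩, rfl⟩
        change ⁅Z, (w : L)⁆ = 0
        rw [← lie_skew, hcent, neg_zero]
      · exact (hω ⟨c, hc⟩ w).trans (by rw [hb'.apply_radical, zero_smul])
    simpa [e, hb₀l] using hker (mem_top (x := x))

theorem IsHeisenbergBasis.pos {p q : ℕ} {b : Module.Basis (Fin p ⊕ Fin p ⊕ Unit ⊕ Fin q) K L}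
    (hb : IsHeisenbergBasis b) (hX : ad K L X ≠ 0) : 0 < p := by
  refine Nat.pos_of_ne_zero fun hp => hX ?_
  subst hp
  suffices (ad K L : L →ₗ[K] Module.End K L) = 0 from LinearMap.congr_fun this X
  refine LinearMap.ext_basis b b fun i j => ?_
  change ⁅b i, b j⁆ = 0
  rcases j with j | j | ⟨⟩ | k
  · exact j.elim0
  · exact j.elim0
  · rcases i with i | i | ⟨⟩ | k
    · exact i.elim0
    · exact i.elim0
    · exact lie_self _
    · rw [← lie_skew, hb.lie_w, neg_zero]
  · exact hb.lie_w _ k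

end LieAlgebra

theorem n_sub_two_filiform_classification_general (g : Type*) [LieRing g] [LieAlgebra ℂ g]
    [FiniteDimensional ℂ g]
    (hmax : ∀ X : g, X ∉ LieAlgebra.derivedSeries ℂ g 1 →
      (LieAlgebra.ad ℂ g X) ^ 2 = 0 ∧
        Module.finrank ℂ (LinearMap.range (LieAlgebra.ad ℂ g X)) ≤ 1)
    (hex : ∃ X : g, X ∉ LieAlgebra.derivedSeries ℂ g 1 ∧ LieAlgebra.ad ℂ g X ≠ 0) :
    ∃ (p q : ℕ), 1 ≤ p ∧ Module.finrank ℂ g = 2 * p + 1 + q ∧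
      ∃ b : Module.Basis (Fin p ⊕ Fin p ⊕ Unit ⊕ Fin q) ℂ g,
        (∀ i : Fin p,
          ⁅b (Sum.inl i), b (Sum.inr (Sum.inl i))⁆ = b (Sum.inr (Sum.inr (Sum.inl ())))) ∧
        (∀ i j : Fin p, i ≠ j → ⁅b (Sum.inl i), b (Sum.inr (Sum.inl j))⁆ = 0) ∧
        (∀ i j : Fin p, ⁅b (Sum.inl i), b (Sum.inl j)⁆ = 0) ∧
        (∀ i j : Fin p, ⁅b (Sum.inr (Sum.inl i)), b (Sum.inr (Sum.inl j))⁆ = 0) ∧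
        (∀ i : Fin p, ⁅b (Sum.inl i), b (Sum.inr (Sum.inr (Sum.inl ())))⁆ = 0) ∧
        (∀ i : Fin p, ⁅b (Sum.inr (Sum.inl i)), b (Sum.inr (Sum.inr (Sum.inl ())))⁆ = 0) ∧
        (∀ (x : g) (k : Fin q), ⁅x, b (Sum.inr (Sum.inr (Sum.inr k)))⁆ = 0) := by
  obtain ⟨X, hXD, hX⟩ := hex
  obtain ⟨U, hXU⟩ : ∃ U, ⁅X, U⁆ ≠ 0 := not_forall.mp fun h => hX (LinearMap.ext h)
  have hspan := LieAlgebra.lie_mem_span_singleton (fun E hE => (hmax E hE).2) hXD hXU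
  have hcent := LieAlgebra.lie_eq_zero_of_lie_mem_span_singleton (fun E hE => (hmax E hE).1) hXD
    fun A => hspan A _
  obtain ⟨p, q, b, hb⟩ := LieAlgebra.exists_isHeisenbergBasis hXU hcent hspan
  refine ⟨p, q, hb.pos hX, ?_, b, hb.lie_x_y, hb.lie_x_y_of_ne,
    hb.lie_x_x, hb.lie_y_y, hb.lie_x_z, hb.lie_y_z, hb.lie_w⟩
  rw [finrank_eq_card_basis b]
  simp only [Fintype.card_sum, Fintype.card_fin, Fintype.card_unit]
  ring

/-- Every `(n-2)`-filiform complex nilpotent Lie algebra (characteristic sequence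
`(2,1,...,1)`, i.e. every `ad X` for `X` outside the derived algebra squares to zero and
has rank at most one, and some such `ad X` is nonzero) is isomorphic to the direct sum of
a Heisenberg algebra `H_{2p+1}` (`p ≥ 1`) and an abelian Lie algebra; equivalently it
admits a basis `X_1,...,X_p, Y_1,...,Y_p, Z, W_1,...,W_q` with `⁅X_i, Y_i⁆ = Z`, all other
brackets of basis vectors zero, and the `W_k` central. -/
theorem n_sub_two_filiform_classification (g : Type*) [LieRing g] [LieAlgebra ℂ g]
    [FiniteDimensional ℂ g] [LieRing.IsNilpotent g]
    (hmax : ∀ X : g, X ∉ LieAlgebra.derivedSeries ℂ g 1 →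
      (LieAlgebra.ad ℂ g X) ^ 2 = 0 ∧
        Module.finrank ℂ (LinearMap.range (LieAlgebra.ad ℂ g X)) ≤ 1)
    (hex : ∃ X : g, X ∉ LieAlgebra.derivedSeries ℂ g 1 ∧ LieAlgebra.ad ℂ g X ≠ 0) :
    ∃ (p q : ℕ), 1 ≤ p ∧ Module.finrank ℂ g = 2 * p + 1 + q ∧
      ∃ b : Module.Basis (Fin p ⊕ Fin p ⊕ Unit ⊕ Fin q) ℂ g,
        (∀ i : Fin p,
          ⁅b (Sum.inl i), b (Sum.inr (Sum.inl i))⁆ = b (Sum.inr (Sum.inr (Sum.inl ())))) ∧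
        (∀ i j : Fin p, i ≠ j → ⁅b (Sum.inl i), b (Sum.inr (Sum.inl j))⁆ = 0) ∧
        (∀ i j : Fin p, ⁅b (Sum.inl i), b (Sum.inl j)⁆ = 0) ∧
        (∀ i j : Fin p, ⁅b (Sum.inr (Sum.inl i)), b (Sum.inr (Sum.inl j))⁆ = 0) ∧
        (∀ i : Fin p, ⁅b (Sum.inl i), b (Sum.inr (Sum.inr (Sum.inl ())))⁆ = 0) ∧
        (∀ i : Fin p, ⁅b (Sum.inr (Sum.inl i)), b (Sum.inr (Sum.inr (Sum.inl ())))⁆ = 0) ∧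
        (∀ (x : g) (k : Fin q), ⁅x, b (Sum.inr (Sum.inr (Sum.inr k)))⁆ = 0) :=
  n_sub_two_filiform_classification_general g hmax hex
end

section
/- The 7-dimensional complex Lie algebra g_7^{65} with basis X_1,...,X_6, Y_1 and nonzero brackets [X_1,X_j] = X_{j+1} for j = 2,3,4,5; [X_3,X_2] = Y_1; [Y_1,X_3] = X_6; [Y_1,X_2] = X_5 + X_6 (others zero or by antisymmetry) is a nilpotent Lie algebra all of whose derivations are nilpotent endomorphisms (i.e., it is characteristically nilpotent). -/
/-!
Give `X_1, X_2` weight 1, `X_j` weight `j - 1` for `j ≥ 3` and `Y_1` weight 3. Brackets add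
weights (up to terms of higher weight), so the weight filtration makes `g` nilpotent.
A derivation of a nilpotent Lie algebra with values in `[g, g]` is nilpotent, as it then maps each
term of the lower central series into the next one. So it suffices that `D X_1` and `D X_2` have no
`X_1`, `X_2`-components. Expressing `D` on `X_3, …, X_6, Y_1` through the brackets that produce them
and applying `D` to `⁅Y_1, X_2⁆ = X_5 + X_6` and to `⁅X_2, X_4⁆ = 0` gives linear equations that
force these four components to vanish as soon as `2 ≠ 0`.
-/

open LieModule

section

variable {R L M : Type*} [CommRing R] [LieRing L] [LieAlgebra R L] [AddCommGroup M] [Module R M]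
  [LieRingModule L M]

theorem LieModule.lie_mem_lowerCentralSeries_one (x : L) (m : M) :
    ⁅x, m⁆ ∈ lowerCentralSeries R L M 1 := by
  rw [lowerCentralSeries_succ, lowerCentralSeries_zero]
  exact LieSubmodule.lie_mem_lie (LieSubmodule.mem_top x) (LieSubmodule.mem_top m)

variable [LieModule R L M]

theorem LieModule.lie_mem_lowerCentralSeries_add_two {x : L} {m : M} {k : ℕ}
    (hx : x ∈ lowerCentralSeries R L L 1) (hm : m ∈ lowerCentralSeries R L M k) :
    ⁅x, m⁆ ∈ lowerCentralSeries R L M (k + 2) := by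
  rw [← LieSubmodule.mem_toSubmodule, lowerCentralSeries_succ, lowerCentralSeries_zero,
    LieSubmodule.lieIdeal_oper_eq_linear_span'] at hx
  induction hx using Submodule.span_induction with
  | mem _ h =>
    obtain ⟨a, -, c, -, rfl⟩ := h
    rw [lie_lie, lowerCentralSeries_succ, lowerCentralSeries_succ]
    exact sub_mem
      (LieSubmodule.lie_mem_lie (LieSubmodule.mem_top a)
        (LieSubmodule.lie_mem_lie (LieSubmodule.mem_top c) hm))
      (LieSubmodule.lie_mem_lie (LieSubmodule.mem_top c)
        (LieSubmodule.lie_mem_lie (LieSubmodule.mem_top a) hm))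
  | zero => simp
  | add _ _ _ _ h₁ h₂ => rw [add_lie]; exact add_mem h₁ h₂
  | smul t _ _ h => rw [smul_lie]; exact SMulMemClass.smul_mem t h

theorem LieModule.isNilpotent_of_filtration (F : ℕ → Submodule R M) {n : ℕ} (h₀ : F 0 = ⊤)
    (hn : F n = ⊥) (hF : ∀ k (x : L) m, m ∈ F k → ⁅x, m⁆ ∈ F (k + 1)) : IsNilpotent L M := by
  have hle : ∀ k, (lowerCentralSeries R L M k : Submodule R M) ≤ F k := by
    intro k
    induction k with
    | zero => simp [h₀]
    | succ k ih =>
      rw [lowerCentralSeries_succ, LieSubmodule.lieIdeal_oper_eq_linear_span', Submodule.span_le]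
      rintro _ ⟨x, -, m, hm, rfl⟩
      exact hF k x m (ih hm)
  refine (isNilpotent_iff R L M).mpr ⟨n, eq_bot_iff.mpr fun m hm => ?_⟩
  simpa [hn] using hle n hm

end

namespace LieDerivation

variable {R L : Type*} [CommRing R] [LieRing L] [LieAlgebra R L] (D : LieDerivation R L L)

theorem apply_lie_mem_lowerCentralSeries_one (x y : L) :
    D ⁅x, y⁆ ∈ lowerCentralSeries R L L 1 := by
  rw [apply_lie_eq_add]
  exact add_mem (lie_mem_lowerCentralSeries_one _ _) (lie_mem_lowerCentralSeries_one _ _)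

theorem apply_mem_lowerCentralSeries_succ (hD : ∀ x, D x ∈ lowerCentralSeries R L L 1)
    {k : ℕ} {y : L} (hy : y ∈ lowerCentralSeries R L L k) :
    D y ∈ lowerCentralSeries R L L (k + 1) := by
  induction k generalizing y with
  | zero => exact hD y
  | succ k ih =>
    rw [← LieSubmodule.mem_toSubmodule, lowerCentralSeries_succ,
      LieSubmodule.lieIdeal_oper_eq_linear_span'] at hy
    induction hy using Submodule.span_induction with
    | mem _ h =>
      obtain ⟨a, -, c, hc, rfl⟩ := h
      rw [apply_lie_eq_add]
      refine add_mem ?_ (lie_mem_lowerCentralSeries_add_two (hD a) hc)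
      rw [lowerCentralSeries_succ]
      exact LieSubmodule.lie_mem_lie (LieSubmodule.mem_top a) (ih hc)
    | zero => simp
    | add _ _ _ _ h₁ h₂ => rw [map_add]; exact add_mem h₁ h₂
    | smul t _ _ h => rw [map_smul]; exact SMulMemClass.smul_mem t h

theorem isNilpotent_of_forall_mem_lowerCentralSeries_one [IsNilpotent L L]
    (hD : ∀ x, D x ∈ lowerCentralSeries R L L 1) : _root_.IsNilpotent D.toLinearMap := by
  obtain ⟨n, hn⟩ := IsNilpotent.nilpotent R L L
  have hpow : ∀ k x, (D.toLinearMap ^ k) x ∈ lowerCentralSeries R L L k := by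
    intro k
    induction k with
    | zero => simp
    | succ k ih =>
      intro x
      rw [pow_succ', Module.End.mul_apply]
      exact D.apply_mem_lowerCentralSeries_succ hD (ih x)
  refine ⟨n, LinearMap.ext fun x => ?_⟩
  simpa [hn] using hpow n x

end LieDerivation

namespace G765

variable {R g : Type*} [CommRing R] [LieRing g] [LieAlgebra R g]

/-- `b 0, …, b 5, b 6` stand for `X_1, …, X_6, Y_1`. -/
structure IsBasis (b : Module.Basis (Fin 7) R g) : Prop where
  lie_0_1 : ⁅b 0, b 1⁆ = b 2
  lie_0_2 : ⁅b 0, b 2⁆ = b 3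
  lie_0_3 : ⁅b 0, b 3⁆ = b 4
  lie_0_4 : ⁅b 0, b 4⁆ = b 5
  lie_0_5 : ⁅b 0, b 5⁆ = 0
  lie_0_6 : ⁅b 0, b 6⁆ = 0
  lie_2_1 : ⁅b 2, b 1⁆ = b 6
  lie_6_1 : ⁅b 6, b 1⁆ = b 4 + b 5
  lie_6_2 : ⁅b 6, b 2⁆ = b 5
  lie_1_3 : ⁅b 1, b 3⁆ = 0
  lie_1_4 : ⁅b 1, b 4⁆ = 0
  lie_1_5 : ⁅b 1, b 5⁆ = 0
  lie_2_3 : ⁅b 2, b 3⁆ = 0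
  lie_2_4 : ⁅b 2, b 4⁆ = 0
  lie_2_5 : ⁅b 2, b 5⁆ = 0
  lie_3_4 : ⁅b 3, b 4⁆ = 0
  lie_3_5 : ⁅b 3, b 5⁆ = 0
  lie_3_6 : ⁅b 3, b 6⁆ = 0
  lie_4_5 : ⁅b 4, b 5⁆ = 0
  lie_4_6 : ⁅b 4, b 6⁆ = 0
  lie_5_6 : ⁅b 5, b 6⁆ = 0

def weight : Fin 7 → ℕ := ![1, 1, 2, 3, 4, 5, 3]

def filtration (b : Module.Basis (Fin 7) R g) (k : ℕ) : Submodule R g :=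
  Submodule.span R (b '' {i | k ≤ weight i})

variable {b : Module.Basis (Fin 7) R g}

theorem basis_mem_filtration {i : Fin 7} {k : ℕ} (h : k ≤ weight i) : b i ∈ filtration b k :=
  Submodule.subset_span ⟨i, h, rfl⟩

theorem filtration_antitone : Antitone (filtration b) := fun _ _ h =>
  Submodule.span_mono (Set.image_mono fun _ hi => le_trans h hi)

theorem filtration_zero : filtration b 0 = ⊤ := by
  simp [filtration, b.span_eq]

theorem filtration_six : filtration b 6 = ⊥ := by
  have : {i | 6 ≤ weight i} = ∅ := by ext i; fin_cases i <;> simp [weight]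
  simp [filtration, this]

namespace IsBasis

theorem lie_eq (hb : IsBasis b) (i j : Fin 7) : ⁅b i, b j⁆ =
    ![![0, b 2, b 3, b 4, b 5, 0, 0],
      ![-b 2, 0, -b 6, 0, 0, 0, -(b 4 + b 5)],
      ![-b 3, b 6, 0, 0, 0, 0, -b 5],
      ![-b 4, 0, 0, 0, 0, 0, 0],
      ![-b 5, 0, 0, 0, 0, 0, 0],
      ![0, 0, 0, 0, 0, 0, 0],
      ![0, b 4 + b 5, b 5, 0, 0, 0, 0]] i j := by
  have skew {x y z : g} (h : ⁅x, y⁆ = z) : ⁅y, x⁆ = -z := by rw [← lie_skew, h]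
  obtain ⟨h01, h02, h03, h04, h05, h06, h21, h61, h62, h13, h14, h15, h23, h24, h25, h34, h35,
    h36, h45, h46, h56⟩ := hb
  fin_cases i <;> fin_cases j <;>
    simp [h01, h02, h03, h04, h05, h06, h21, h61, h62, h13, h14, h15, h23, h24, h25, h34, h35,
      h36, h45, h46, h56, skew]

theorem lie_basis_mem_filtration (hb : IsBasis b) (i j : Fin 7) :
    ⁅b i, b j⁆ ∈ filtration b (weight i + weight j) := by
  rw [hb.lie_eq]
  fin_cases i <;> fin_cases j <;>
    simp only [weight, Fin.zero_eta, Fin.mk_one, Fin.isValue, Fin.reduceFinMk, Nat.reduceAdd,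
      Nat.succ_eq_add_one, Matrix.cons_val_zero, Matrix.cons_val_one, Matrix.cons_val,
      Matrix.cons_val', Matrix.cons_val_fin_one, zero_mem, neg_mem_iff] <;>
    first
    | exact basis_mem_filtration (by decide)
    | refine add_mem (basis_mem_filtration ?_) (basis_mem_filtration ?_) <;> decide

theorem lie_mem_filtration_succ (hb : IsBasis b) {k : ℕ} (x : g) {y : g}
    (hy : y ∈ filtration b k) : ⁅x, y⁆ ∈ filtration b (k + 1) := by
  induction hy using Submodule.span_induction with
  | mem _ h =>
    obtain ⟨j, hj : k ≤ weight j, rfl⟩ := h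
    rw [← b.sum_repr x, sum_lie]
    refine Submodule.sum_mem _ fun i _ => ?_
    rw [smul_lie]
    refine Submodule.smul_mem _ _ (filtration_antitone ?_ (hb.lie_basis_mem_filtration i j))
    have : 1 ≤ weight i := by fin_cases i <;> decide
    omega
  | zero => simp
  | add _ _ _ _ h₁ h₂ => rw [lie_add]; exact add_mem h₁ h₂
  | smul t _ _ h => rw [lie_smul]; exact Submodule.smul_mem _ t h

theorem isNilpotent (hb : IsBasis b) : LieRing.IsNilpotent g :=
  isNilpotent_of_filtration (filtration b) filtration_zero filtration_six
    fun _ x _ => hb.lie_mem_filtration_succ x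

theorem mem_lowerCentralSeries_one (hb : IsBasis b) {y : g} (h₀ : b.repr y 0 = 0)
    (h₁ : b.repr y 1 = 0) : y ∈ lowerCentralSeries R g g 1 := by
  rw [← b.sum_repr y, Fin.sum_univ_seven, h₀, h₁, zero_smul, zero_smul, zero_add, zero_add,
    ← hb.lie_2_1, ← hb.lie_0_4, ← hb.lie_0_3, ← hb.lie_0_2, ← hb.lie_0_1]
  apply_rules [add_mem, SMulMemClass.smul_mem, lie_mem_lowerCentralSeries_one]

section Derivation

variable (D : LieDerivation R g g) {c e : Fin 7 → R}

theorem derivation_apply_two (hb : IsBasis b) (hc : D (b 0) = ∑ i, c i • b i)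
    (he : D (b 1) = ∑ i, e i • b i) :
    D (b 2) = (c 0 + e 1) • b 2 + e 2 • b 3 + (c 6 + e 3) • b 4 + (c 6 + e 4) • b 5 + c 2 • b 6 := by
  rw [← hb.lie_0_1, D.apply_lie_eq_add, hc, he]
  simp only [Fin.sum_univ_seven, lie_add, add_lie, lie_smul, smul_lie, hb.lie_eq,
    Matrix.cons_val', Matrix.cons_val, Matrix.cons_val_zero, Matrix.cons_val_one,
    Matrix.cons_val_fin_one]
  module

theorem derivation_apply_three (hb : IsBasis b) (hc : D (b 0) = ∑ i, c i • b i)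
    (he : D (b 1) = ∑ i, e i • b i) :
    D (b 3) = (2 * c 0 + e 1) • b 3 + e 2 • b 4 + (2 * c 6 + e 3) • b 5 - c 1 • b 6 := by
  rw [← hb.lie_0_2, D.apply_lie_eq_add, hb.derivation_apply_two D hc he, hc]
  simp only [Fin.sum_univ_seven, lie_add, add_lie, lie_smul, smul_lie, hb.lie_eq,
    Matrix.cons_val', Matrix.cons_val, Matrix.cons_val_zero, Matrix.cons_val_one,
    Matrix.cons_val_fin_one]
  module

theorem derivation_apply_four (hb : IsBasis b) (hc : D (b 0) = ∑ i, c i • b i)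
    (he : D (b 1) = ∑ i, e i • b i) :
    D (b 4) = (3 * c 0 + e 1) • b 4 + e 2 • b 5 := by
  rw [← hb.lie_0_3, D.apply_lie_eq_add, hb.derivation_apply_three D hc he, hc]
  simp only [Fin.sum_univ_seven, lie_add, add_lie, lie_sub, lie_smul, smul_lie, hb.lie_eq,
    Matrix.cons_val', Matrix.cons_val, Matrix.cons_val_zero, Matrix.cons_val_one,
    Matrix.cons_val_fin_one]
  module

theorem derivation_apply_five (hb : IsBasis b) (hc : D (b 0) = ∑ i, c i • b i)
    (he : D (b 1) = ∑ i, e i • b i) :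
    D (b 5) = (4 * c 0 + e 1) • b 5 := by
  rw [← hb.lie_0_4, D.apply_lie_eq_add, hb.derivation_apply_four D hc he, hc]
  simp only [Fin.sum_univ_seven, lie_add, add_lie, lie_smul, smul_lie, hb.lie_eq,
    Matrix.cons_val', Matrix.cons_val, Matrix.cons_val_zero, Matrix.cons_val_one,
    Matrix.cons_val_fin_one]
  module

theorem derivation_apply_six (hb : IsBasis b) (hc : D (b 0) = ∑ i, c i • b i)
    (he : D (b 1) = ∑ i, e i • b i) :
    D (b 6) = -e 0 • b 3 + c 2 • b 4 + (c 2 - e 6) • b 5 + (c 0 + 2 * e 1) • b 6 := by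
  rw [← hb.lie_2_1, D.apply_lie_eq_add, hb.derivation_apply_two D hc he, he]
  simp only [Fin.sum_univ_seven, lie_add, add_lie, lie_smul, smul_lie, hb.lie_eq,
    Matrix.cons_val', Matrix.cons_val, Matrix.cons_val_zero, Matrix.cons_val_one,
    Matrix.cons_val_fin_one]
  module

theorem derivation_coeff_eq_zero [NoZeroDivisors R] [NeZero (2 : R)] (hb : IsBasis b)
    (hc : D (b 0) = ∑ i, c i • b i) (he : D (b 1) = ∑ i, e i • b i) :
    c 0 = 0 ∧ c 1 = 0 ∧ e 0 = 0 ∧ e 1 = 0 := by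
  have coeff {p q : R} (h : p • b 4 + q • b 5 = 0) : p = 0 ∧ q = 0 :=
    ⟨by simpa using congrArg (b.coord 4) h, by simpa using congrArg (b.coord 5) h⟩
  -- Without the `X_6` in `⁅Y_1, X_2⁆ = X_5 + X_6` the grading derivation would survive.
  obtain ⟨h₁, h₂⟩ : 2 * e 1 - 2 * c 0 = 0 ∧ 2 * e 1 - 3 * c 0 = 0 := by
    have h := congrArg D hb.lie_6_1
    rw [D.apply_lie_eq_add, map_add, hb.derivation_apply_six D hc he, he,
      hb.derivation_apply_four D hc he, hb.derivation_apply_five D hc he] at h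
    simp only [Fin.sum_univ_seven, lie_add, add_lie, lie_smul, smul_lie, hb.lie_eq,
      Matrix.cons_val', Matrix.cons_val, Matrix.cons_val_zero, Matrix.cons_val_one,
      Matrix.cons_val_fin_one] at h
    exact coeff (by linear_combination (norm := module) h)
  obtain ⟨h₃, h₄⟩ : e 0 + c 1 = 0 ∧ c 1 = 0 := by
    have h := congrArg D hb.lie_1_3
    rw [D.apply_lie_eq_add, map_zero, hb.derivation_apply_three D hc he, he] at h
    simp only [Fin.sum_univ_seven, lie_add, add_lie, lie_sub, lie_smul, smul_lie, hb.lie_eq,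
      Matrix.cons_val', Matrix.cons_val, Matrix.cons_val_zero, Matrix.cons_val_one,
      Matrix.cons_val_fin_one] at h
    exact coeff (by linear_combination (norm := module) h)
  have hc₀ : c 0 = 0 := by linear_combination h₁ - h₂
  have he₁ : e 1 = 0 := by
    have : (2 : R) * e 1 = 0 := by linear_combination h₁ + 2 * hc₀
    exact (mul_eq_zero.mp this).resolve_left two_ne_zero
  exact ⟨hc₀, h₄, by linear_combination h₃ - h₄, he₁⟩

theorem derivation_apply_mem_lowerCentralSeries_one [NoZeroDivisors R] [NeZero (2 : R)]
    (hb : IsBasis b) (x : g) : D x ∈ lowerCentralSeries R g g 1 := by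
  obtain ⟨hc₀, hc₁, he₀, he₁⟩ :=
    hb.derivation_coeff_eq_zero D (b.sum_repr (D (b 0))).symm (b.sum_repr (D (b 1))).symm
  have hbasis : ∀ i, D (b i) ∈ lowerCentralSeries R g g 1 := by
    intro i
    fin_cases i
    · exact hb.mem_lowerCentralSeries_one hc₀ hc₁
    · exact hb.mem_lowerCentralSeries_one he₀ he₁
    · exact hb.lie_0_1 ▸ D.apply_lie_mem_lowerCentralSeries_one _ _
    · exact hb.lie_0_2 ▸ D.apply_lie_mem_lowerCentralSeries_one _ _
    · exact hb.lie_0_3 ▸ D.apply_lie_mem_lowerCentralSeries_one _ _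
    · exact hb.lie_0_4 ▸ D.apply_lie_mem_lowerCentralSeries_one _ _
    · exact hb.lie_2_1 ▸ D.apply_lie_mem_lowerCentralSeries_one _ _
  rw [← b.sum_repr x, map_sum]
  exact Submodule.sum_mem _ fun i _ => by rw [map_smul]; exact SMulMemClass.smul_mem _ (hbasis i)

end Derivation

end IsBasis

end G765

/-- The 7-dimensional Lie algebra `g_7^{65}` (basis `X_1,...,X_6, Y_1 = b 0,...,b 5, b 6`;
nonzero brackets `⁅X_1,X_j⁆ = X_{j+1}` for `j = 2,3,4,5`, `⁅X_3,X_2⁆ = Y_1`,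
`⁅Y_1,X_3⁆ = X_6`, `⁅Y_1,X_2⁆ = X_5 + X_6`) is nilpotent and all of its derivations are
nilpotent endomorphisms. -/
theorem g7_65_characteristically_nilpotent (g : Type*) [LieRing g] [LieAlgebra ℂ g]
    (b : Module.Basis (Fin 7) ℂ g)
    (h01 : ⁅b 0, b 1⁆ = b 2) (h02 : ⁅b 0, b 2⁆ = b 3) (h03 : ⁅b 0, b 3⁆ = b 4)
    (h04 : ⁅b 0, b 4⁆ = b 5) (h05 : ⁅b 0, b 5⁆ = 0) (h06 : ⁅b 0, b 6⁆ = 0)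
    (h21 : ⁅b 2, b 1⁆ = b 6) (h61 : ⁅b 6, b 1⁆ = b 4 + b 5) (h62 : ⁅b 6, b 2⁆ = b 5)
    (h13 : ⁅b 1, b 3⁆ = 0) (h14 : ⁅b 1, b 4⁆ = 0) (h15 : ⁅b 1, b 5⁆ = 0)
    (h23 : ⁅b 2, b 3⁆ = 0) (h24 : ⁅b 2, b 4⁆ = 0) (h25 : ⁅b 2, b 5⁆ = 0)
    (h34 : ⁅b 3, b 4⁆ = 0) (h35 : ⁅b 3, b 5⁆ = 0) (h36 : ⁅b 3, b 6⁆ = 0)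
    (h45 : ⁅b 4, b 5⁆ = 0) (h46 : ⁅b 4, b 6⁆ = 0) (h56 : ⁅b 5, b 6⁆ = 0) :
    LieModule.IsNilpotent g g ∧
      ∀ D : LieDerivation ℂ g g, IsNilpotent D.toLinearMap := by
  have hb : G765.IsBasis b := ⟨h01, h02, h03, h04, h05, h06, h21, h61, h62, h13, h14, h15, h23,
    h24, h25, h34, h35, h36, h45, h46, h56⟩
  have := hb.isNilpotent
  exact ⟨this, fun D => D.isNilpotent_of_forall_mem_lowerCentralSeries_one
    (hb.derivation_apply_mem_lowerCentralSeries_one D)⟩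
end

section
/- A finite direct sum of Lie algebra ideals g = g_1 ⊕ ... ⊕ g_k is characteristically nilpotent if and only if each summand g_i is characteristically nilpotent. -/
/-!
Extending a derivation of `g i` by zero on the other summands gives a derivation of `g` whose
powers restrict to those of the original one, which proves `→`.

For `←`, a characteristically nilpotent Lie algebra `L` has its centre inside `[L, L]`: if `z` is
central and `f` is a functional vanishing on `[L, L]` with `f z ≠ 0`, then `x ↦ f x • z` is a
derivation with eigenvector `z` for the eigenvalue `f z`. Now a derivation `D` of `g` differs from
the direct sum `Δ` of its diagonal blocks by a derivation with values in the centre of `g`, hence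
in `[g, g]`, and such a derivation vanishes on `[g, g]`. So `D` agrees with the nilpotent `Δ`
modulo `[g, g]` and on `[g, g]`, which forces `D` to be nilpotent.
-/

open DirectSum LieAlgebra

namespace Module.End

variable {R M : Type*} [Ring R] [AddCommGroup M] [Module R M]

theorem isNilpotent_of_range_sub_le_of_le_ker_sub {D Δ : Module.End R M} {A : Submodule R M}
    (hA : A ≤ A.comap D) (h_range : LinearMap.range (D - Δ) ≤ A)
    (h_ker : A ≤ LinearMap.ker (D - Δ)) (hΔ : IsNilpotent Δ) : IsNilpotent D := by
  obtain ⟨m, hm⟩ := hΔ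
  have pow_sub_mem : ∀ n x, (D ^ n) x - (Δ ^ n) x ∈ A := by
    intro n
    induction n with
    | zero => simp
    | succ n ih =>
      intro x
      have hsplit : (D ^ (n + 1)) x - (Δ ^ (n + 1)) x
          = D ((D ^ n) x - (Δ ^ n) x) + (D - Δ) ((Δ ^ n) x) := by
        simp only [pow_succ', Module.End.mul_apply, map_sub, LinearMap.sub_apply]; abel
      rw [hsplit]
      exact A.add_mem (hA (ih x)) (h_range ⟨_, rfl⟩)
  have pow_eq_on : ∀ n, ∀ a ∈ A, (D ^ n) a = (Δ ^ n) a := by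
    intro n
    induction n with
    | zero => simp
    | succ n ih =>
      intro a ha
      have hDa : D a = Δ a := sub_eq_zero.mp (h_ker ha)
      rw [pow_succ, Module.End.mul_apply, ih _ (hA ha), hDa, ← Module.End.mul_apply, ← pow_succ]
  refine ⟨m + m, LinearMap.ext fun x => ?_⟩
  have hx : (D ^ m) x ∈ A := by simpa [hm] using pow_sub_mem m x
  rw [pow_add, Module.End.mul_apply, pow_eq_on m _ hx, hm, LinearMap.zero_apply,
    LinearMap.zero_apply]

end Module.End

namespace DirectSum

variable {R ι : Type*} [Semiring R] {M : ι → Type*} [∀ i, AddCommMonoid (M i)]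
  [∀ i, Module R (M i)]

theorem lmap_pow (f : ∀ i, Module.End R (M i)) (n : ℕ) :
    lmap f ^ n = lmap fun i => f i ^ n := by
  induction n with
  | zero => exact lmap_id.symm
  | succ n ih => rw [pow_succ, ih]; exact (lmap_comp _ _).symm

theorem isNilpotent_lmap_iff [Finite ι] (f : ∀ i, Module.End R (M i)) :
    IsNilpotent (lmap f) ↔ ∀ i, IsNilpotent (f i) := by
  constructor
  · rintro ⟨n, hn⟩ i
    refine ⟨n, LinearMap.ext fun x => ?_⟩
    classical
    simpa [lmap_pow] using congr($hn (of M i x) i)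
  · intro h
    choose n hn using h
    obtain ⟨m, hm⟩ := (Set.finite_range n).bddAbove
    refine ⟨m, ?_⟩
    rw [lmap_pow]
    ext x i
    simp [pow_eq_zero_of_le (hm ⟨i, rfl⟩) (hn i)]

end DirectSum

namespace LieDerivation

variable {R L : Type*} [CommRing R] [LieRing L] [LieAlgebra R L]

theorem apply_mem_lie_top (D : LieDerivation R L L) {y : L}
    (hy : y ∈ ⁅(⊤ : LieIdeal R L), (⊤ : LieIdeal R L)⁆) :
    D y ∈ ⁅(⊤ : LieIdeal R L), (⊤ : LieIdeal R L)⁆ := by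
  rw [← LieSubmodule.mem_toSubmodule, LieSubmodule.lieIdeal_oper_eq_linear_span'] at hy ⊢
  induction hy using Submodule.span_induction with
  | mem _ h =>
    obtain ⟨a, -, b, -, rfl⟩ := h
    rw [D.apply_lie_eq_sub]
    exact Submodule.sub_mem _ (Submodule.subset_span ⟨a, trivial, _, trivial, rfl⟩)
      (Submodule.subset_span ⟨b, trivial, _, trivial, rfl⟩)
  | zero => simp
  | add _ _ _ _ hx hy => rw [map_add]; exact Submodule.add_mem _ hx hy
  | smul c _ _ hx => rw [map_smul]; exact Submodule.smul_mem _ c hx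

theorem lie_top_le_ker_of_forall_mem_center (N : LieDerivation R L L)
    (hN : ∀ x, N x ∈ center R L) :
    ⁅(⊤ : LieIdeal R L), (⊤ : LieIdeal R L)⁆.toSubmodule ≤
      LinearMap.ker N.toLinearMap := by
  rw [LieSubmodule.lieIdeal_oper_eq_linear_span', Submodule.span_le]
  rintro _ ⟨a, -, b, -, rfl⟩
  have hNb := (LieModule.mem_maxTrivSubmodule R L L _).mp (hN b) a
  have hNa := (LieModule.mem_maxTrivSubmodule R L L _).mp (hN a) b
  simp [N.apply_lie_eq_sub, hNa, hNb]

def smulRightOfMemCenter (f : L →ₗ[R] R) (hf : ∀ a b : L, f ⁅a, b⁆ = 0) {z : L}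
    (hz : z ∈ center R L) : LieDerivation R L L where
  toLinearMap := f.smulRight z
  leibniz' a b := by
    have hz' := (LieModule.mem_maxTrivSubmodule R L L z).mp hz
    simp [hf, hz']

end LieDerivation

namespace LieAlgebra

variable {K L : Type*} [Field K] [LieRing L] [LieAlgebra K L]

theorem center_le_lie_top_of_forall_isNilpotent
    (h : ∀ D : LieDerivation K L L, IsNilpotent D.toLinearMap) :
    center K L ≤ ⁅(⊤ : LieIdeal K L), (⊤ : LieIdeal K L)⁆ := by
  intro z hz
  by_contra hz'
  rw [← LieSubmodule.mem_toSubmodule] at hz'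
  obtain ⟨f, hfz, hf⟩ := Submodule.exists_le_ker_of_notMem hz'
  have hf' : ∀ a b : L, f ⁅a, b⁆ = 0 := fun a b =>
    hf (LieSubmodule.lie_mem_lie (LieSubmodule.mem_top a) (LieSubmodule.mem_top b))
  set E := LieDerivation.smulRightOfMemCenter f hf' hz
  have hE : ∀ n, (E.toLinearMap ^ n) z = f z ^ n • z := by
    intro n
    induction n with
    | zero => simp
    | succ n ih =>
      rw [pow_succ', Module.End.mul_apply, ih, map_smul, pow_succ, mul_smul]
      rfl
  obtain ⟨n, hn⟩ := h E
  have hz0 : z ≠ 0 := by rintro rfl; exact hz' (Submodule.zero_mem _)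
  simpa [hfz, hz0] using (hE n).symm.trans congr($hn z)

end LieAlgebra

namespace DirectSum

variable {R ι : Type*} [CommRing R] {L : ι → Type*} [∀ i, LieRing (L i)]
  [∀ i, LieAlgebra R (L i)]

theorem mem_center_iff [DecidableEq ι] {z : ⨁ i, L i} :
    z ∈ center R (⨁ i, L i) ↔ ∀ i, z i ∈ center R (L i) := by
  simp only [LieModule.mem_maxTrivSubmodule]
  refine ⟨fun hz i w => ?_, fun hz y => DFinsupp.ext fun i => ?_⟩
  · simpa [bracket_apply] using congr($(hz (of L i w)) i)
  · simp [bracket_apply, hz]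

theorem center_le_lie_top
    (h : ∀ i, center R (L i) ≤ ⁅(⊤ : LieIdeal R (L i)), (⊤ : LieIdeal R (L i))⁆) :
    center R (⨁ i, L i) ≤
      ⁅(⊤ : LieIdeal R (⨁ i, L i)), (⊤ : LieIdeal R (⨁ i, L i))⁆ := by
  classical
  intro z hz
  rw [← sum_support_of z]
  refine sum_mem fun i _ => ?_
  have hof := LieIdeal.mem_map (f := lieAlgebraOf R ι L i) (h i ((mem_center_iff.mp hz) i))
  exact LieSubmodule.mono_lie le_top le_top (LieIdeal.map_bracket_le _ hof)

end DirectSum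

namespace LieDerivation

variable {R ι : Type*} [CommRing R] {L : ι → Type*} [∀ i, LieRing (L i)]
  [∀ i, LieAlgebra R (L i)]

def directSumMap (D : ∀ i, LieDerivation R (L i) (L i)) :
    LieDerivation R (⨁ i, L i) (⨁ i, L i) where
  toLinearMap := lmap fun i => (D i).toLinearMap
  leibniz' a b := DFinsupp.ext fun i => by
    simp [bracket_apply, (D i).apply_lie_eq_sub]

variable [DecidableEq ι]

def diagonalBlock (D : LieDerivation R (⨁ i, L i) (⨁ i, L i)) (i : ι) :
    LieDerivation R (L i) (L i) where
  toLinearMap := component R ι L i ∘ₗ D.toLinearMap ∘ₗ lof R ι L i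
  leibniz' a b := by
    change D (of L i ⁅a, b⁆) i = ⁅a, D (of L i b) i⁆ - ⁅b, D (of L i a) i⁆
    rw [← lie_of_same, D.apply_lie_eq_sub]
    simp [bracket_apply]

@[simp]
theorem diagonalBlock_apply (D : LieDerivation R (⨁ i, L i) (⨁ i, L i)) (i : ι) (a : L i) :
    diagonalBlock D i a = D (of L i a) i :=
  rfl

theorem apply_of_apply_mem_center_of_ne (D : LieDerivation R (⨁ i, L i) (⨁ i, L i)) {i j : ι}
    (hij : i ≠ j) (a : L j) : D (of L j a) i ∈ center R (L i) := by
  rw [LieModule.mem_maxTrivSubmodule]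
  intro w
  rw [← lie_skew, neg_eq_zero]
  have := congr($(D.apply_lie_eq_sub (of L j a) (of L i w)) i)
  simpa [lie_of_of_ne _ hij.symm, bracket_apply, of_eq_of_ne _ _ _ hij] using this.symm

theorem sub_directSumMap_diagonalBlock_apply_mem_center
    (D : LieDerivation R (⨁ i, L i) (⨁ i, L i)) (x : ⨁ i, L i) :
    (D - directSumMap (diagonalBlock D)) x ∈ center R (⨁ i, L i) := by
  induction x using DirectSum.induction_on with
  | zero => simp
  | add x y hx hy => rw [map_add]; exact add_mem hx hy
  | of j a =>
    refine mem_center_iff.mpr fun i => ?_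
    obtain rfl | hij := eq_or_ne i j
    · simp [directSumMap]
    · simpa [directSumMap, of_eq_of_ne _ _ _ hij] using D.apply_of_apply_mem_center_of_ne hij a

end LieDerivation

/-- A finite direct sum of Lie algebras is characteristically nilpotent if and only if
each summand is characteristically nilpotent. -/
theorem directSum_characteristically_nilpotent_iff (k : ℕ) (g : Fin k → Type*)
    [∀ i, LieRing (g i)] [∀ i, LieAlgebra ℂ (g i)] :
    (∀ D : LieDerivation ℂ (⨁ i, g i) (⨁ i, g i), IsNilpotent D.toLinearMap) ↔
      ∀ i, ∀ D : LieDerivation ℂ (g i) (g i), IsNilpotent D.toLinearMap := by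
  constructor
  · intro h i D
    simpa using (isNilpotent_lmap_iff _).mp (h (LieDerivation.directSumMap (Pi.single i D))) i
  · intro h D
    set Δ := LieDerivation.directSumMap (LieDerivation.diagonalBlock D)
    have h_center := center_le_lie_top fun i => center_le_lie_top_of_forall_isNilpotent (h i)
    refine Module.End.isNilpotent_of_range_sub_le_of_le_ker_sub (Δ := Δ.toLinearMap)
      (fun _ hx => D.apply_mem_lie_top hx) ?_ ?_ ((isNilpotent_lmap_iff _).mpr fun i => h i _)
    · rintro _ ⟨x, rfl⟩
      exact h_center (D.sub_directSumMap_diagonalBlock_apply_mem_center x)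
    · exact (D - Δ).lie_top_le_ker_of_forall_mem_center
        (D.sub_directSumMap_diagonalBlock_apply_mem_center)
end

section
/- The 7-dimensional complex Lie algebra g_7^{83} with basis X_1,...,X_6, Y_1 and nonzero brackets [X_1,X_j] = X_{j+1} for j = 2,3,4,5; [X_5,X_2] = [X_3,X_4] = X_6; [X_4,X_2] = X_6; [X_3,X_2] = X_5; [Y_1,X_3] = X_6; [Y_1,X_2] = X_5 is a nilpotent Lie algebra of nilpotency index 5, that is, [g,[g,[g,[g,g]]]] ≠ 0 and the 6-fold bracket vanishes, and it is characteristically nilpotent. -/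
private lemma coords7 {g : Type*} [AddCommGroup g] [Module ℂ g] (b : Module.Basis (Fin 7) ℂ g) {u : g}
    {c0 c1 c2 c3 c4 c5 c6 : ℂ}
    (h : u = c0 • b 0 + c1 • b 1 + c2 • b 2 + c3 • b 3 + c4 • b 4 + c5 • b 5 + c6 • b 6) :
    b.repr u 0 = c0 ∧ b.repr u 1 = c1 ∧ b.repr u 2 = c2 ∧ b.repr u 3 = c3 ∧
    b.repr u 4 = c4 ∧ b.repr u 5 = c5 ∧ b.repr u 6 = c6 := by
  subst h
  refine ⟨?_, ?_, ?_, ?_, ?_, ?_, ?_⟩ <;>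
    simp [Finsupp.single_apply, Fin.reduceEq]

/-- The 7-dimensional Lie algebra `g_7^{83}` (basis `X_1,...,X_6, Y_1`; nonzero brackets
`⁅X_1,X_j⁆ = X_{j+1}` (`j = 2,3,4,5`), `⁅X_5,X_2⁆ = ⁅X_3,X_4⁆ = X_6`, `⁅X_4,X_2⁆ = X_6`,
`⁅X_3,X_2⁆ = X_5`, `⁅Y_1,X_3⁆ = X_6`, `⁅Y_1,X_2⁆ = X_5`) is nilpotent of nilpotency
index `5` (i.e. `C^5 g = 0` and `C^4 g ≠ 0`) and characteristically nilpotent. -/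
theorem g7_83_nilindex_five_and_char_nilpotent (g : Type*) [LieRing g] [LieAlgebra ℂ g]
    (b : Module.Basis (Fin 7) ℂ g)
    (h01 : ⁅b 0, b 1⁆ = b 2) (h02 : ⁅b 0, b 2⁆ = b 3) (h03 : ⁅b 0, b 3⁆ = b 4)
    (h04 : ⁅b 0, b 4⁆ = b 5) (h05 : ⁅b 0, b 5⁆ = 0) (h06 : ⁅b 0, b 6⁆ = 0)
    (h41 : ⁅b 4, b 1⁆ = b 5) (h23 : ⁅b 2, b 3⁆ = b 5)
    (h31 : ⁅b 3, b 1⁆ = b 5) (h21 : ⁅b 2, b 1⁆ = b 4)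
    (h62 : ⁅b 6, b 2⁆ = b 5) (h61 : ⁅b 6, b 1⁆ = b 4)
    (h15 : ⁅b 1, b 5⁆ = 0) (h24 : ⁅b 2, b 4⁆ = 0) (h25 : ⁅b 2, b 5⁆ = 0)
    (h34 : ⁅b 3, b 4⁆ = 0) (h35 : ⁅b 3, b 5⁆ = 0) (h36 : ⁅b 3, b 6⁆ = 0)
    (h45 : ⁅b 4, b 5⁆ = 0) (h46 : ⁅b 4, b 6⁆ = 0) (h56 : ⁅b 5, b 6⁆ = 0) :
    LieModule.lowerCentralSeries ℂ g g 5 = ⊥ ∧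
    LieModule.lowerCentralSeries ℂ g g 4 ≠ ⊥ ∧
    ∀ D : LieDerivation ℂ g g, IsNilpotent D.toLinearMap := by
  -- antisymmetric / trivial brackets
  have h10 : ⁅b 1, b 0⁆ = -b 2 := by rw [← lie_skew, h01]
  have h20 : ⁅b 2, b 0⁆ = -b 3 := by rw [← lie_skew, h02]
  have h30 : ⁅b 3, b 0⁆ = -b 4 := by rw [← lie_skew, h03]
  have h40 : ⁅b 4, b 0⁆ = -b 5 := by rw [← lie_skew, h04]
  have h50 : ⁅b 5, b 0⁆ = 0 := by rw [← lie_skew, h05, neg_zero]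
  have h60 : ⁅b 6, b 0⁆ = 0 := by rw [← lie_skew, h06, neg_zero]
  have h12 : ⁅b 1, b 2⁆ = -b 4 := by rw [← lie_skew, h21]
  have h13 : ⁅b 1, b 3⁆ = -b 5 := by rw [← lie_skew, h31]
  have h14 : ⁅b 1, b 4⁆ = -b 5 := by rw [← lie_skew, h41]
  have h32 : ⁅b 3, b 2⁆ = -b 5 := by rw [← lie_skew, h23]
  have h16 : ⁅b 1, b 6⁆ = -b 4 := by rw [← lie_skew, h61]
  have h26 : ⁅b 2, b 6⁆ = -b 5 := by rw [← lie_skew, h62]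
  have h42 : ⁅b 4, b 2⁆ = 0 := by rw [← lie_skew, h24, neg_zero]
  have h43 : ⁅b 4, b 3⁆ = 0 := by rw [← lie_skew, h34, neg_zero]
  have h51 : ⁅b 5, b 1⁆ = 0 := by rw [← lie_skew, h15, neg_zero]
  have h52 : ⁅b 5, b 2⁆ = 0 := by rw [← lie_skew, h25, neg_zero]
  have h53 : ⁅b 5, b 3⁆ = 0 := by rw [← lie_skew, h35, neg_zero]
  have h54 : ⁅b 5, b 4⁆ = 0 := by rw [← lie_skew, h45, neg_zero]
  have h63 : ⁅b 6, b 3⁆ = 0 := by rw [← lie_skew, h36, neg_zero]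
  have h64 : ⁅b 6, b 4⁆ = 0 := by rw [← lie_skew, h46, neg_zero]
  have h65 : ⁅b 6, b 5⁆ = 0 := by rw [← lie_skew, h56, neg_zero]
  -- bracket-with-basis formulas
  have L0 : ∀ x : g, ⁅x, b 0⁆ = (-b.repr x 1) • b 2 + (-b.repr x 2) • b 3
      + (-b.repr x 3) • b 4 + (-b.repr x 4) • b 5 := by
    intro x
    conv_lhs => rw [← b.sum_repr x]
    rw [Fin.sum_univ_seven]
    simp only [add_lie, smul_lie, lie_self, h10, h20, h30, h40, h50, h60, smul_zero]
    module
  have L1 : ∀ x : g, ⁅x, b 1⁆ = b.repr x 0 • b 2 + (b.repr x 2 + b.repr x 6) • b 4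
      + (b.repr x 3 + b.repr x 4) • b 5 := by
    intro x
    conv_lhs => rw [← b.sum_repr x]
    rw [Fin.sum_univ_seven]
    simp only [add_lie, smul_lie, lie_self, h01, h21, h31, h41, h51, h61, smul_zero]
    module
  have L2 : ∀ x : g, ⁅x, b 2⁆ = b.repr x 0 • b 3 + (-b.repr x 1) • b 4
      + (b.repr x 6 - b.repr x 3) • b 5 := by
    intro x
    conv_lhs => rw [← b.sum_repr x]
    rw [Fin.sum_univ_seven]
    simp only [add_lie, smul_lie, lie_self, h02, h12, h32, h42, h52, h62, smul_zero]
    module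
  have L3 : ∀ x : g, ⁅x, b 3⁆ = b.repr x 0 • b 4 + (b.repr x 2 - b.repr x 1) • b 5 := by
    intro x
    conv_lhs => rw [← b.sum_repr x]
    rw [Fin.sum_univ_seven]
    simp only [add_lie, smul_lie, lie_self, h03, h13, h23, h43, h53, h63, smul_zero]
    module
  have L4 : ∀ x : g, ⁅x, b 4⁆ = (b.repr x 0 - b.repr x 1) • b 5 := by
    intro x
    conv_lhs => rw [← b.sum_repr x]
    rw [Fin.sum_univ_seven]
    simp only [add_lie, smul_lie, lie_self, h04, h14, h24, h34, h54, h64, smul_zero]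
    module
  have L5 : ∀ x : g, ⁅x, b 5⁆ = 0 := by
    intro x
    conv_lhs => rw [← b.sum_repr x]
    rw [Fin.sum_univ_seven]
    simp only [add_lie, smul_lie, lie_self, h05, h15, h25, h35, h45, h65, smul_zero]
    module
  have L6 : ∀ x : g, ⁅x, b 6⁆ = (-b.repr x 1) • b 4 + (-b.repr x 2) • b 5 := by
    intro x
    conv_lhs => rw [← b.sum_repr x]
    rw [Fin.sum_univ_seven]
    simp only [add_lie, smul_lie, lie_self, h06, h16, h26, h36, h46, h56, smul_zero]
    module
  -- the filtration submodules
  set S1 : Submodule ℂ g := Submodule.span ℂ {b 2, b 3, b 4, b 5} with hS1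
  set S2 : Submodule ℂ g := Submodule.span ℂ {b 3, b 4, b 5} with hS2
  set S3 : Submodule ℂ g := Submodule.span ℂ {b 4, b 5} with hS3
  set S4 : Submodule ℂ g := Submodule.span ℂ {b 5} with hS4
  have m12 : b 2 ∈ S1 := Submodule.subset_span (by simp)
  have m13 : b 3 ∈ S1 := Submodule.subset_span (by simp)
  have m14 : b 4 ∈ S1 := Submodule.subset_span (by simp)
  have m15 : b 5 ∈ S1 := Submodule.subset_span (by simp)
  have m23 : b 3 ∈ S2 := Submodule.subset_span (by simp)
  have m24 : b 4 ∈ S2 := Submodule.subset_span (by simp)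
  have m25 : b 5 ∈ S2 := Submodule.subset_span (by simp)
  have m34 : b 4 ∈ S3 := Submodule.subset_span (by simp)
  have m35 : b 5 ∈ S3 := Submodule.subset_span (by simp)
  have m45 : b 5 ∈ S4 := Submodule.subset_span (by simp)
  -- basis brackets land in the filtration
  have Kx0 : ∀ x : g, ⁅x, b 0⁆ ∈ S1 := fun x => by
    rw [L0]
    exact add_mem (add_mem (add_mem (S1.smul_mem _ m12) (S1.smul_mem _ m13))
      (S1.smul_mem _ m14)) (S1.smul_mem _ m15)
  have Kx1 : ∀ x : g, ⁅x, b 1⁆ ∈ S1 := fun x => by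
    rw [L1]
    exact add_mem (add_mem (S1.smul_mem _ m12) (S1.smul_mem _ m14)) (S1.smul_mem _ m15)
  have Kx2 : ∀ x : g, ⁅x, b 2⁆ ∈ S2 := fun x => by
    rw [L2]
    exact add_mem (add_mem (S2.smul_mem _ m23) (S2.smul_mem _ m24)) (S2.smul_mem _ m25)
  have Kx3 : ∀ x : g, ⁅x, b 3⁆ ∈ S3 := fun x => by
    rw [L3]
    exact add_mem (S3.smul_mem _ m34) (S3.smul_mem _ m35)
  have Kx4 : ∀ x : g, ⁅x, b 4⁆ ∈ S4 := fun x => by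
    rw [L4]; exact S4.smul_mem _ m45
  have inc21 : S2 ≤ S1 := Submodule.span_mono (by intro y hy; simp at hy; rcases hy with h|h|h <;> simp [h])
  have inc32 : S3 ≤ S2 := Submodule.span_mono (by intro y hy; simp at hy; rcases hy with h|h <;> simp [h])
  have inc43 : S4 ≤ S3 := Submodule.span_mono (by intro y hy; simp at hy; simp [hy])
  -- blanket bracket lemmas
  have K1 : ∀ x y : g, ⁅x, y⁆ ∈ S1 := by
    intro x y
    rw [← b.sum_repr y, Fin.sum_univ_seven]
    simp only [lie_add, lie_smul]
    exact add_mem (add_mem (add_mem (add_mem (add_mem (add_mem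
      (S1.smul_mem _ (Kx0 x)) (S1.smul_mem _ (Kx1 x))) (S1.smul_mem _ (inc21 (Kx2 x))))
      (S1.smul_mem _ (inc21 (inc32 (Kx3 x))))) (S1.smul_mem _ (inc21 (inc32 (inc43 (Kx4 x))))))
      (by rw [L5]; simp)) (S1.smul_mem _ (by rw [L6]; exact add_mem (S1.smul_mem _ m14) (S1.smul_mem _ m15)))
  have K2 : ∀ x : g, ∀ m ∈ S1, ⁅x, m⁆ ∈ S2 := by
    intro x m hm
    induction hm using Submodule.span_induction with
    | mem y hy =>
      rcases hy with rfl | rfl | rfl | rfl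
      · exact Kx2 x
      · exact inc32 (Kx3 x)
      · exact inc32 (inc43 (Kx4 x))
      · rw [L5]; simp
    | zero => simp
    | add u v hu hv hu' hv' => rw [lie_add]; exact add_mem hu' hv'
    | smul c u hu hu' => rw [lie_smul]; exact S2.smul_mem _ hu'
  have K3 : ∀ x : g, ∀ m ∈ S2, ⁅x, m⁆ ∈ S3 := by
    intro x m hm
    induction hm using Submodule.span_induction with
    | mem y hy =>
      rcases hy with rfl | rfl | rfl
      · exact Kx3 x
      · exact inc43 (Kx4 x)
      · rw [L5]; simp
    | zero => simp
    | add u v hu hv hu' hv' => rw [lie_add]; exact add_mem hu' hv'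
    | smul c u hu hu' => rw [lie_smul]; exact S3.smul_mem _ hu'
  have K4 : ∀ x : g, ∀ m ∈ S3, ⁅x, m⁆ ∈ S4 := by
    intro x m hm
    induction hm using Submodule.span_induction with
    | mem y hy =>
      rcases hy with rfl | rfl
      · exact Kx4 x
      · rw [L5]; simp
    | zero => simp
    | add u v hu hv hu' hv' => rw [lie_add]; exact add_mem hu' hv'
    | smul c u hu hu' => rw [lie_smul]; exact S4.smul_mem _ hu'
  have K5 : ∀ x : g, ∀ m ∈ S4, ⁅x, m⁆ = 0 := by
    intro x m hm
    induction hm using Submodule.span_induction with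
    | mem y hy => rcases hy with rfl; exact L5 x
    | zero => simp
    | add u v hu hv hu' hv' => rw [lie_add, hu', hv', add_zero]
    | smul c u hu hu' => rw [lie_smul, hu', smul_zero]
  -- Lie submodules
  let N1 : LieSubmodule ℂ g g := ⟨S1, fun {x m} _ => K1 x m⟩
  let N2 : LieSubmodule ℂ g g := ⟨S2, fun {x m} hm => inc32 (K3 x m hm)⟩
  let N3 : LieSubmodule ℂ g g := ⟨S3, fun {x m} hm => inc43 (K4 x m hm)⟩
  let N4 : LieSubmodule ℂ g g := ⟨S4, fun {x m} hm => by rw [K5 x m hm]; exact S4.zero_mem⟩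
  have c1 : LieModule.lowerCentralSeries ℂ g g 1 ≤ N1 := by
    rw [show (1 : ℕ) = 0 + 1 from rfl, LieModule.lowerCentralSeries_succ]
    exact (LieSubmodule.lie_le_iff _ _ _).mpr fun x _ m _ => K1 x m
  have c2 : LieModule.lowerCentralSeries ℂ g g 2 ≤ N2 := by
    rw [show (2 : ℕ) = 1 + 1 from rfl, LieModule.lowerCentralSeries_succ]
    exact le_trans (LieSubmodule.mono_lie_right _ c1)
      ((LieSubmodule.lie_le_iff _ _ _).mpr fun x _ m hm => K2 x m hm)
  have c3 : LieModule.lowerCentralSeries ℂ g g 3 ≤ N3 := by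
    rw [show (3 : ℕ) = 2 + 1 from rfl, LieModule.lowerCentralSeries_succ]
    exact le_trans (LieSubmodule.mono_lie_right _ c2)
      ((LieSubmodule.lie_le_iff _ _ _).mpr fun x _ m hm => K3 x m hm)
  have c4 : LieModule.lowerCentralSeries ℂ g g 4 ≤ N4 := by
    rw [show (4 : ℕ) = 3 + 1 from rfl, LieModule.lowerCentralSeries_succ]
    exact le_trans (LieSubmodule.mono_lie_right _ c3)
      ((LieSubmodule.lie_le_iff _ _ _).mpr fun x _ m hm => K4 x m hm)
  have c5 : LieModule.lowerCentralSeries ℂ g g 5 = ⊥ := by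
    rw [show (5 : ℕ) = 4 + 1 from rfl, LieModule.lowerCentralSeries_succ]
    rw [eq_bot_iff]
    exact le_trans (LieSubmodule.mono_lie_right _ c4)
      ((LieSubmodule.lie_le_iff _ _ _).mpr fun x _ m hm => (LieSubmodule.mem_bot _).mpr (K5 x m hm))
  refine ⟨c5, ?_, ?_⟩
  · -- lcs 4 ≠ ⊥
    have mem4 : b 5 ∈ LieModule.lowerCentralSeries ℂ g g 4 := by
      have e1 : b 2 ∈ LieModule.lowerCentralSeries ℂ g g 1 := by
        rw [show (1 : ℕ) = 0 + 1 from rfl, LieModule.lowerCentralSeries_succ, ← h01]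
        exact LieSubmodule.lie_mem_lie (LieSubmodule.mem_top _) (LieSubmodule.mem_top _)
      have e2 : b 3 ∈ LieModule.lowerCentralSeries ℂ g g 2 := by
        rw [show (2 : ℕ) = 1 + 1 from rfl, LieModule.lowerCentralSeries_succ, ← h02]
        exact LieSubmodule.lie_mem_lie (LieSubmodule.mem_top _) e1
      have e3 : b 4 ∈ LieModule.lowerCentralSeries ℂ g g 3 := by
        rw [show (3 : ℕ) = 2 + 1 from rfl, LieModule.lowerCentralSeries_succ, ← h03]
        exact LieSubmodule.lie_mem_lie (LieSubmodule.mem_top _) e2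
      rw [show (4 : ℕ) = 3 + 1 from rfl, LieModule.lowerCentralSeries_succ, ← h04]
      exact LieSubmodule.lie_mem_lie (LieSubmodule.mem_top _) e3
    intro hbot
    rw [hbot] at mem4
    exact b.ne_zero 5 ((LieSubmodule.mem_bot _).mp mem4)
  · -- characteristically nilpotent
    intro D
    have E01 : D (b 2) = ⁅b 0, D (b 1)⁆ + ⁅D (b 0), b 1⁆ := by
      rw [← h01]; exact D.apply_lie_eq_add _ _
    have E02 : D (b 3) = ⁅b 0, D (b 2)⁆ + ⁅D (b 0), b 2⁆ := by
      rw [← h02]; exact D.apply_lie_eq_add _ _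
    have E03 : D (b 4) = ⁅b 0, D (b 3)⁆ + ⁅D (b 0), b 3⁆ := by
      rw [← h03]; exact D.apply_lie_eq_add _ _
    have E04 : D (b 5) = ⁅b 0, D (b 4)⁆ + ⁅D (b 0), b 4⁆ := by
      rw [← h04]; exact D.apply_lie_eq_add _ _
    have E21 : D (b 4) = ⁅b 2, D (b 1)⁆ + ⁅D (b 2), b 1⁆ := by
      rw [← h21]; exact D.apply_lie_eq_add _ _
    have E41 : D (b 5) = ⁅b 4, D (b 1)⁆ + ⁅D (b 4), b 1⁆ := by
      rw [← h41]; exact D.apply_lie_eq_add _ _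
    have E61 : D (b 4) = ⁅b 6, D (b 1)⁆ + ⁅D (b 6), b 1⁆ := by
      rw [← h61]; exact D.apply_lie_eq_add _ _
    have E06 : (0 : g) = ⁅b 0, D (b 6)⁆ + ⁅D (b 0), b 6⁆ := by
      have h := D.apply_lie_eq_add (b 0) (b 6); rwa [h06, map_zero] at h
    obtain ⟨q01_0, q01_1, q01_2, q01_3, q01_4, q01_5, q01_6⟩ :=
      coords7 b (show D (b 2) = ((0:ℂ)) • b 0 + ((0:ℂ)) • b 1 + (b.repr (D (b 0)) 0 + b.repr (D (b 1)) 1) • b 2 + (b.repr (D (b 1)) 2) • b 3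
          + (b.repr (D (b 0)) 2 + b.repr (D (b 0)) 6 + b.repr (D (b 1)) 3) • b 4 + (b.repr (D (b 0)) 3 + b.repr (D (b 0)) 4 + b.repr (D (b 1)) 4) • b 5 + ((0:ℂ)) • b 6 by
        rw [E01, L1 (D (b 0)), ← lie_skew, L0 (D (b 1))]; module)
    obtain ⟨q02_0, q02_1, q02_2, q02_3, q02_4, q02_5, q02_6⟩ :=
      coords7 b (show D (b 3) = ((0:ℂ)) • b 0 + ((0:ℂ)) • b 1 + (b.repr (D (b 2)) 1) • b 2 + (b.repr (D (b 0)) 0 + b.repr (D (b 2)) 2) • b 3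
          + (b.repr (D (b 2)) 3 - b.repr (D (b 0)) 1) • b 4 + (b.repr (D (b 0)) 6 - b.repr (D (b 0)) 3 + b.repr (D (b 2)) 4) • b 5 + ((0:ℂ)) • b 6 by
        rw [E02, L2 (D (b 0)), ← lie_skew, L0 (D (b 2))]; module)
    obtain ⟨q03_0, q03_1, q03_2, q03_3, q03_4, q03_5, q03_6⟩ :=
      coords7 b (show D (b 4) = ((0:ℂ)) • b 0 + ((0:ℂ)) • b 1 + (b.repr (D (b 3)) 1) • b 2 + (b.repr (D (b 3)) 2) • b 3
          + (b.repr (D (b 0)) 0 + b.repr (D (b 3)) 3) • b 4 + (b.repr (D (b 0)) 2 - b.repr (D (b 0)) 1 + b.repr (D (b 3)) 4) • b 5 + ((0:ℂ)) • b 6 by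
        rw [E03, L3 (D (b 0)), ← lie_skew, L0 (D (b 3))]; module)
    obtain ⟨q04_0, q04_1, q04_2, q04_3, q04_4, q04_5, q04_6⟩ :=
      coords7 b (show D (b 5) = ((0:ℂ)) • b 0 + ((0:ℂ)) • b 1 + (b.repr (D (b 4)) 1) • b 2 + (b.repr (D (b 4)) 2) • b 3
          + (b.repr (D (b 4)) 3) • b 4 + (b.repr (D (b 0)) 0 - b.repr (D (b 0)) 1 + b.repr (D (b 4)) 4) • b 5 + ((0:ℂ)) • b 6 by
        rw [E04, L4 (D (b 0)), ← lie_skew, L0 (D (b 4))]; module)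
    obtain ⟨q06_0, q06_1, q06_2, q06_3, q06_4, q06_5, q06_6⟩ :=
      coords7 b (show (0 : g) = ((0:ℂ)) • b 0 + ((0:ℂ)) • b 1 + (b.repr (D (b 6)) 1) • b 2 + (b.repr (D (b 6)) 2) • b 3
          + (-b.repr (D (b 0)) 1 + b.repr (D (b 6)) 3) • b 4 + (-b.repr (D (b 0)) 2 + b.repr (D (b 6)) 4) • b 5 + ((0:ℂ)) • b 6 by
        rw [E06, L6 (D (b 0)), ← lie_skew, L0 (D (b 6))]; module)
    obtain ⟨q21_0, q21_1, q21_2, q21_3, q21_4, q21_5, q21_6⟩ :=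
      coords7 b (show D (b 4) = ((0:ℂ)) • b 0 + ((0:ℂ)) • b 1 + (b.repr (D (b 2)) 0) • b 2 + (-b.repr (D (b 1)) 0) • b 3
          + (b.repr (D (b 2)) 2 + b.repr (D (b 2)) 6 + b.repr (D (b 1)) 1) • b 4 + (b.repr (D (b 2)) 3 + b.repr (D (b 2)) 4 + b.repr (D (b 1)) 3 - b.repr (D (b 1)) 6) • b 5 + ((0:ℂ)) • b 6 by
        rw [E21, L1 (D (b 2)), ← lie_skew, L2 (D (b 1))]; module)
    obtain ⟨q41_0, q41_1, q41_2, q41_3, q41_4, q41_5, q41_6⟩ :=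
      coords7 b (show D (b 5) = ((0:ℂ)) • b 0 + ((0:ℂ)) • b 1 + (b.repr (D (b 4)) 0) • b 2 + ((0:ℂ)) • b 3
          + (b.repr (D (b 4)) 2 + b.repr (D (b 4)) 6) • b 4 + (b.repr (D (b 4)) 3 + b.repr (D (b 4)) 4 + b.repr (D (b 1)) 1 - b.repr (D (b 1)) 0) • b 5 + ((0:ℂ)) • b 6 by
        rw [E41, L1 (D (b 4)), ← lie_skew, L4 (D (b 1))]; module)
    obtain ⟨q61_0, q61_1, q61_2, q61_3, q61_4, q61_5, q61_6⟩ :=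
      coords7 b (show D (b 4) = ((0:ℂ)) • b 0 + ((0:ℂ)) • b 1 + (b.repr (D (b 6)) 0) • b 2 + ((0:ℂ)) • b 3
          + (b.repr (D (b 6)) 2 + b.repr (D (b 6)) 6 + b.repr (D (b 1)) 1) • b 4 + (b.repr (D (b 6)) 3 + b.repr (D (b 6)) 4 + b.repr (D (b 1)) 2) • b 5 + ((0:ℂ)) • b 6 by
        rw [E61, L1 (D (b 6)), ← lie_skew, L6 (D (b 1))]; module)
    have z20 : b.repr (D (b 2)) 0 = 0 := q01_0
    have z21 : b.repr (D (b 2)) 1 = 0 := q01_1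
    have z26 : b.repr (D (b 2)) 6 = 0 := q01_6
    have z30 : b.repr (D (b 3)) 0 = 0 := q02_0
    have z31 : b.repr (D (b 3)) 1 = 0 := q02_1
    have z32 : b.repr (D (b 3)) 2 = 0 := by linear_combination q02_2 + z21
    have z36 : b.repr (D (b 3)) 6 = 0 := q02_6
    have z40 : b.repr (D (b 4)) 0 = 0 := q03_0
    have z41 : b.repr (D (b 4)) 1 = 0 := q03_1
    have z42 : b.repr (D (b 4)) 2 = 0 := by linear_combination q03_2 + z31
    have z43 : b.repr (D (b 4)) 3 = 0 := by linear_combination q03_3 + z32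
    have z46 : b.repr (D (b 4)) 6 = 0 := q03_6
    have z50 : b.repr (D (b 5)) 0 = 0 := q04_0
    have z51 : b.repr (D (b 5)) 1 = 0 := q04_1
    have z52 : b.repr (D (b 5)) 2 = 0 := by linear_combination q04_2 + z41
    have z53 : b.repr (D (b 5)) 3 = 0 := by linear_combination q04_3 + z42
    have z54 : b.repr (D (b 5)) 4 = 0 := by linear_combination q04_4 + z43
    have z56 : b.repr (D (b 5)) 6 = 0 := q04_6
    simp only [map_zero, Finsupp.coe_zero, Pi.zero_apply] at q06_2 q06_3 q06_4 q06_5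
    have z61 : b.repr (D (b 6)) 1 = 0 := q06_2.symm
    have z62 : b.repr (D (b 6)) 2 = 0 := q06_3.symm
    have z63 : b.repr (D (b 6)) 3 = b.repr (D (b 0)) 1 := by linear_combination -q06_4
    have z64 : b.repr (D (b 6)) 4 = b.repr (D (b 0)) 2 := by linear_combination -q06_5
    have z10 : b.repr (D (b 1)) 0 = 0 := by linear_combination q21_3 - z43
    have z60 : b.repr (D (b 6)) 0 = 0 := by linear_combination -q61_2 + z42
    have h3 : (3:ℂ) * b.repr (D (b 0)) 1 = 0 := by linear_combination -q61_5 + q03_5 + q02_4 + q01_3 - z63 - z64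
    have z01 : b.repr (D (b 0)) 1 = 0 := by linear_combination h3 / 3
    have hAB : b.repr (D (b 0)) 0 - b.repr (D (b 1)) 1 = 0 := by linear_combination -q04_5 + q41_5 + z01 + z43 - z10
    have hI : -2 * b.repr (D (b 0)) 0 + b.repr (D (b 1)) 1 = 0 := by linear_combination q03_4 - q21_4 + q02_3 - z26
    have z00 : b.repr (D (b 0)) 0 = 0 := by linear_combination -hAB - hI
    have z11 : b.repr (D (b 1)) 1 = 0 := by linear_combination z00 - hAB
    have z22 : b.repr (D (b 2)) 2 = 0 := by linear_combination q01_2 + z00 + z11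
    have z33 : b.repr (D (b 3)) 3 = 0 := by linear_combination q02_3 + z00 + z22
    have z44 : b.repr (D (b 4)) 4 = 0 := by linear_combination q03_4 + z00 + z33
    have z55 : b.repr (D (b 5)) 5 = 0 := by linear_combination q04_5 + z00 - z01 + z44
    have z66 : b.repr (D (b 6)) 6 = 0 := by linear_combination -q61_4 + z44 - z62 - z11
    have z63' : b.repr (D (b 6)) 3 = 0 := by linear_combination z63 + z01
    have hF0 : D (b 0) = b.repr (D (b 0)) 2 • b 2 + b.repr (D (b 0)) 3 • b 3 + b.repr (D (b 0)) 4 • b 4 + b.repr (D (b 0)) 5 • b 5 + b.repr (D (b 0)) 6 • b 6 := by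
      conv_lhs => rw [← b.sum_repr (D (b 0))]
      rw [Fin.sum_univ_seven, z00, z01]
      module
    have hF1 : D (b 1) = b.repr (D (b 1)) 2 • b 2 + b.repr (D (b 1)) 3 • b 3 + b.repr (D (b 1)) 4 • b 4 + b.repr (D (b 1)) 5 • b 5 + b.repr (D (b 1)) 6 • b 6 := by
      conv_lhs => rw [← b.sum_repr (D (b 1))]
      rw [Fin.sum_univ_seven, z10, z11]
      module
    have hF2 : D (b 2) = b.repr (D (b 2)) 3 • b 3 + b.repr (D (b 2)) 4 • b 4 + b.repr (D (b 2)) 5 • b 5 := by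
      conv_lhs => rw [← b.sum_repr (D (b 2))]
      rw [Fin.sum_univ_seven, z20, z21, z22, z26]
      module
    have hF3 : D (b 3) = b.repr (D (b 3)) 4 • b 4 + b.repr (D (b 3)) 5 • b 5 := by
      conv_lhs => rw [← b.sum_repr (D (b 3))]
      rw [Fin.sum_univ_seven, z30, z31, z32, z33, z36]
      module
    have hF4 : D (b 4) = b.repr (D (b 4)) 5 • b 5 := by
      conv_lhs => rw [← b.sum_repr (D (b 4))]
      rw [Fin.sum_univ_seven, z40, z41, z42, z43, z44, z46]
      module
    have hF5 : D (b 5) = 0 := by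
      conv_lhs => rw [← b.sum_repr (D (b 5))]
      rw [Fin.sum_univ_seven, z50, z51, z52, z53, z54, z55, z56]
      module
    have hF6 : D (b 6) = b.repr (D (b 6)) 4 • b 4 + b.repr (D (b 6)) 5 • b 5 := by
      conv_lhs => rw [← b.sum_repr (D (b 6))]
      rw [Fin.sum_univ_seven, z60, z61, z62, z63', z66]
      module
    obtain ⟨a02, a03, a04, a05, a06, hG0⟩ : ∃ p q r s t : ℂ, D (b 0) = p • b 2 + q • b 3 + r • b 4 + s • b 5 + t • b 6 := ⟨_, _, _, _, _, hF0⟩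
    obtain ⟨a12, a13, a14, a15, a16, hG1⟩ : ∃ p q r s t : ℂ, D (b 1) = p • b 2 + q • b 3 + r • b 4 + s • b 5 + t • b 6 := ⟨_, _, _, _, _, hF1⟩
    obtain ⟨a23, a24, a25, hG2⟩ : ∃ p q r : ℂ, D (b 2) = p • b 3 + q • b 4 + r • b 5 := ⟨_, _, _, hF2⟩
    obtain ⟨a34, a35, hG3⟩ : ∃ p q : ℂ, D (b 3) = p • b 4 + q • b 5 := ⟨_, _, hF3⟩
    obtain ⟨a45, hG4⟩ : ∃ p : ℂ, D (b 4) = p • b 5 := ⟨_, hF4⟩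
    obtain ⟨a64, a65, hG6⟩ : ∃ p q : ℂ, D (b 6) = p • b 4 + q • b 5 := ⟨_, _, hF6⟩
    refine ⟨5, Module.Basis.ext b fun i => ?_⟩
    have hpow : ∀ v : g, (D.toLinearMap ^ 5) v = D (D (D (D (D v)))) := by
      intro v
      simp [pow_succ, Module.End.mul_apply, LieDerivation.coeFn_coe]
    rw [hpow, LinearMap.zero_apply]
    fin_cases i <;>
      simp [hG0, hG1, hG2, hG3, hG4, hF5, hG6, map_add, map_smul, smul_add, smul_smul,
        smul_zero, add_zero, zero_add]
end

section
/- The bracket defined on ℂ^7 with basis X_1,...,X_6, Y_1 by [X_1,X_j] = X_{j+1} for j = 2,3,4,5; [X_4,X_2] = α X_6; [X_3,X_2] = Y_1 + α X_5; [Y_1,X_3] = X_6; [Y_1,X_2] = X_5 + X_6 (other brackets zero or by antisymmetry) satisfies the Jacobi identity for every complex number α; in particular it defines a Lie algebra, and this Lie algebra is nilpotent. -/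
/-! Give the coordinates `X_1, X_2, X_3, X_4, X_5, X_6, Y_1` the weights `1, 1, 2, 3, 4, 5, 3`.
Every structure constant `⁅e_i, e_j⁆ = ∑ c e_k` has `wt e_k ≥ wt e_i + wt e_j`, so bracketing with
anything raises the weight filtration by at least one. All weights are at most `5`, hence every
left-normed bracket of six elements vanishes. -/

/-- The bracket on `ℂ^7` (coordinates `X_1,...,X_6, Y_1`) defined by
`⁅X_1,X_j⁆ = X_{j+1}` (`j = 2,3,4,5`), `⁅X_4,X_2⁆ = α X_6`, `⁅X_3,X_2⁆ = Y_1 + α X_5`,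
`⁅Y_1,X_3⁆ = X_6`, `⁅Y_1,X_2⁆ = X_5 + X_6`, extended bilinearly and antisymmetrically. -/
noncomputable def g766Bracket (α : ℂ) (x y : Fin 7 → ℂ) : Fin 7 → ℂ := fun k =>
  if k = 2 then x 0 * y 1 - x 1 * y 0
  else if k = 3 then x 0 * y 2 - x 2 * y 0
  else if k = 4 then
    x 0 * y 3 - x 3 * y 0 + α * (x 2 * y 1 - x 1 * y 2) + (x 6 * y 1 - x 1 * y 6)
  else if k = 5 then
    x 0 * y 4 - x 4 * y 0 + α * (x 3 * y 1 - x 1 * y 3)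
      + (x 6 * y 2 - x 2 * y 6) + (x 6 * y 1 - x 1 * y 6)
  else if k = 6 then x 2 * y 1 - x 1 * y 2
  else 0

def g766Weight : Fin 7 → ℕ := ![1, 1, 2, 3, 4, 5, 3]

def g766Filtration (k : ℕ) : Set (Fin 7 → ℂ) :=
  {x | ∀ i, g766Weight i < k → x i = 0}

theorem g766Bracket_antisymm (α : ℂ) (x y : Fin 7 → ℂ) :
    g766Bracket α x y = - g766Bracket α y x := by
  funext k
  simp only [g766Bracket, Pi.neg_apply]
  split_ifs <;> ring

theorem g766Bracket_jacobi (α : ℂ) (x y z : Fin 7 → ℂ) :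
    g766Bracket α x (g766Bracket α y z) + g766Bracket α y (g766Bracket α z x)
      + g766Bracket α z (g766Bracket α x y) = 0 := by
  funext k
  fin_cases k <;> simp [g766Bracket] <;> ring

theorem g766Bracket_apply_eq_zero {α : ℂ} {x : Fin 7 → ℂ} (y : Fin 7 → ℂ) {i : Fin 7}
    (hx : ∀ j, g766Weight j < g766Weight i → x j = 0) : g766Bracket α x y i = 0 := by
  fin_cases i <;> simp (disch := decide) [g766Bracket, hx]

theorem g766Bracket_mem_filtration {α : ℂ} {k : ℕ} {x : Fin 7 → ℂ} (y : Fin 7 → ℂ)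
    (hx : x ∈ g766Filtration k) : g766Bracket α x y ∈ g766Filtration (k + 1) :=
  fun _ hi => g766Bracket_apply_eq_zero y fun j hj => hx j (by omega)

theorem mem_g766Filtration_one (x : Fin 7 → ℂ) : x ∈ g766Filtration 1 := by
  intro i hi
  fin_cases i <;> simp [g766Weight] at hi

theorem eq_zero_of_mem_g766Filtration_six {x : Fin 7 → ℂ} (hx : x ∈ g766Filtration 6) :
    x = 0 := by
  funext i
  exact hx i (by fin_cases i <;> decide)

/-- For every `α : ℂ`, the bracket above is antisymmetric and satisfies the Jacobi
identity (hence defines a Lie algebra), and this Lie algebra is nilpotent: all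
left-normed six-fold brackets vanish. -/
theorem g766Bracket_jacobi_and_nilpotent (α : ℂ) :
    (∀ x y : Fin 7 → ℂ, g766Bracket α x y = - g766Bracket α y x) ∧
    (∀ x y z : Fin 7 → ℂ,
      g766Bracket α x (g766Bracket α y z) + g766Bracket α y (g766Bracket α z x)
        + g766Bracket α z (g766Bracket α x y) = 0) ∧
    (∀ x₁ x₂ x₃ x₄ x₅ x₆ : Fin 7 → ℂ,
      g766Bracket α (g766Bracket α (g766Bracket α (g766Bracket α
        (g766Bracket α x₁ x₂) x₃) x₄) x₅) x₆ = 0) := by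
  refine ⟨g766Bracket_antisymm α, g766Bracket_jacobi α, ?_⟩
  intro x₁ x₂ x₃ x₄ x₅ x₆
  apply eq_zero_of_mem_g766Filtration_six
  iterate 5 apply g766Bracket_mem_filtration
  exact mem_g766Filtration_one x₁
end

section
/- The 2m-dimensional complex Lie algebra g_{2m}^2 (m ≥ 4) with basis X_1,...,X_6, Y_1,...,Y_{2m-6} and nonzero brackets [X_1,X_j] = X_{j+1} for j = 2,3,4,5; [X_5,X_2] = [X_3,X_4] = Y_1; [X_3,X_2] = Y_2; [Y_{2t-1},Y_{2t}] = X_6 for 2 ≤ t ≤ m-3 has derived algebra [g,g] of dimension 6, spanned by X_3, X_4, X_5, X_6, Y_1, Y_2, and has center of dimension 3. -/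
/-!
The brackets of basis vectors span the derived algebra, and by the bracket table each of them
is `0` or `±` one of `X₃, X₄, X₅, X₆, Y₁, Y₂`, all of which occur.

For the center, write a central `z` in the basis. Since `ad X₁` maps `X₂, …, X₅` to
`X₃, …, X₆` and kills everything else, the `X₂, …, X₅`-coordinates of `z` vanish; `X₁` is the only
basis vector whose bracket with `X₃` has an `X₄`-component, so the `X₁`-coordinate vanishes; and
for `k ≥ 3` the partner `Y_{k'}` of `Y_k` in its pair `{Y_{2t-1}, Y_{2t}}` is the only one with
`⁅Y_{k'}, Y_k⁆ = ±X₆`, so the `Y_k`-coordinate vanishes. What is left, `X₆, Y₁, Y₂`, is central.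
-/

open Module Submodule LieAlgebra Set

section General

variable {ι R L M : Type*} [CommRing R] [LieRing L] [LieAlgebra R L]

theorem LieAlgebra.derivedSeries_one_toSubmodule_eq_span_lie_basis (b : Module.Basis ι R L) :
    (derivedSeries R L 1).toSubmodule = span R (range fun p : ι × ι => ⁅b p.1, b p.2⁆) := by
  rw [derivedSeries_def, derivedSeriesOfIdeal_succ, derivedSeriesOfIdeal_zero,
    LieSubmodule.lieIdeal_oper_eq_linear_span']
  refine le_antisymm (span_le.2 ?_) (span_mono ?_)
  · rintro _ ⟨x, -, y, -, rfl⟩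
    rw [← b.linearCombination_repr x, ← b.linearCombination_repr y,
      Finsupp.linearCombination_apply, Finsupp.linearCombination_apply, Finsupp.sum,
      Finsupp.sum, sum_lie_sum]
    refine sum_mem fun i _ => sum_mem fun j _ => ?_
    rw [smul_lie, lie_smul]
    exact smul_mem _ _ (smul_mem _ _ (subset_span ⟨(i, j), rfl⟩))
  · rintro _ ⟨p, rfl⟩
    exact ⟨b p.1, trivial, b p.2, trivial, rfl⟩

theorem LieAlgebra.mem_center_iff_forall_basis_lie_eq_zero (b : Module.Basis ι R L) {z : L} :
    z ∈ center R L ↔ ∀ i, ⁅b i, z⁆ = 0 := by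
  refine ⟨fun hz i => hz (b i), fun h x => ?_⟩
  rw [← b.linearCombination_repr x, Finsupp.linearCombination_apply, Finsupp.sum, sum_lie]
  exact Finset.sum_eq_zero fun i _ => by rw [smul_lie, h, smul_zero]

variable [AddCommGroup M] [Module R M] [LieRingModule L M] [LieModule R L M]

theorem Module.Basis.repr_eq_zero_of_lie_eq_zero [Fintype ι] (b : Basis ι R M) {x : L} {z : M}
    (hz : ⁅x, z⁆ = 0) {k l : ι} (hk : IsUnit (b.repr ⁅x, b k⁆ l))
    (hother : ∀ k' ≠ k, b.repr ⁅x, b k'⁆ l = 0) : b.repr z k = 0 := by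
  have hcoord : b.repr ⁅x, z⁆ l = b.repr z k * b.repr ⁅x, b k⁆ l := by
    conv_lhs => rw [← b.sum_repr z]
    simp only [lie_sum, lie_smul, map_sum, map_smul, Finsupp.coe_finsetSum, Finset.sum_apply,
      Finsupp.smul_apply, smul_eq_mul]
    exact Finset.sum_eq_single k (fun k' _ hk' => by rw [hother k' hk', mul_zero]) (by simp)
  rw [hz, map_zero, Finsupp.zero_apply] at hcoord
  exact hk.mul_left_eq_zero.1 hcoord.symm

theorem Module.Basis.finrank_span_image [Nontrivial R] (b : Basis ι R M) (s : Finset ι) :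
    finrank R (span R (b '' s)) = s.card := by
  rw [image_eq_range]
  exact (finrank_span_eq_card (b.linearIndependent.comp _ Subtype.val_injective)).trans (by simp)

end General

theorem lt_two_mul_sub_six {m k : ℕ} (hm : 4 ≤ m) (hk : k < 2) : k < 2 * m - 6 := by
  omega

/-- `Sum.inl j` stands for `X_{j+1}` and `Sum.inr i` for `Y_{i+1}`. -/
structure IsG2m2Basis {R L : Type*} [CommRing R] [LieRing L] [LieAlgebra R L] {m : ℕ}
    (hm : 4 ≤ m) (b : Basis (Fin 6 ⊕ Fin (2 * m - 6)) R L) : Prop where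
  h01 : ⁅b (Sum.inl 0), b (Sum.inl 1)⁆ = b (Sum.inl 2)
  h02 : ⁅b (Sum.inl 0), b (Sum.inl 2)⁆ = b (Sum.inl 3)
  h03 : ⁅b (Sum.inl 0), b (Sum.inl 3)⁆ = b (Sum.inl 4)
  h04 : ⁅b (Sum.inl 0), b (Sum.inl 4)⁆ = b (Sum.inl 5)
  h05 : ⁅b (Sum.inl 0), b (Sum.inl 5)⁆ = 0
  h41 : ⁅b (Sum.inl 4), b (Sum.inl 1)⁆ =
    b (Sum.inr ⟨0, lt_two_mul_sub_six hm Nat.zero_lt_two⟩)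
  h23 : ⁅b (Sum.inl 2), b (Sum.inl 3)⁆ =
    b (Sum.inr ⟨0, lt_two_mul_sub_six hm Nat.zero_lt_two⟩)
  h21 : ⁅b (Sum.inl 2), b (Sum.inl 1)⁆ =
    b (Sum.inr ⟨1, lt_two_mul_sub_six hm Nat.one_lt_two⟩)
  h13 : ⁅b (Sum.inl 1), b (Sum.inl 3)⁆ = 0
  h15 : ⁅b (Sum.inl 1), b (Sum.inl 5)⁆ = 0
  h24 : ⁅b (Sum.inl 2), b (Sum.inl 4)⁆ = 0
  h25 : ⁅b (Sum.inl 2), b (Sum.inl 5)⁆ = 0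
  h34 : ⁅b (Sum.inl 3), b (Sum.inl 4)⁆ = 0
  h35 : ⁅b (Sum.inl 3), b (Sum.inl 5)⁆ = 0
  h45 : ⁅b (Sum.inl 4), b (Sum.inl 5)⁆ = 0
  hXY : ∀ (j : Fin 6) (i : Fin (2 * m - 6)), ⁅b (Sum.inl j), b (Sum.inr i)⁆ = 0
  hYY1 : ∀ i j : Fin (2 * m - 6), (i : ℕ) % 2 = 0 → 2 ≤ (i : ℕ) →
    (j : ℕ) = (i : ℕ) + 1 → ⁅b (Sum.inr i), b (Sum.inr j)⁆ = b (Sum.inl 5)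
  hYY0 : ∀ i j : Fin (2 * m - 6),
    ¬ ((i : ℕ) % 2 = 0 ∧ 2 ≤ (i : ℕ) ∧ (j : ℕ) = (i : ℕ) + 1) →
    ¬ ((j : ℕ) % 2 = 0 ∧ 2 ≤ (j : ℕ) ∧ (i : ℕ) = (j : ℕ) + 1) →
    ⁅b (Sum.inr i), b (Sum.inr j)⁆ = 0

namespace IsG2m2Basis

open Sum

variable {R L : Type*} [CommRing R] [LieRing L] [LieAlgebra R L] {m : ℕ} {hm : 4 ≤ m}
  {b : Basis (Fin 6 ⊕ Fin (2 * m - 6)) R L}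

variable (hm) in
def derivedIndices : Finset (Fin 6 ⊕ Fin (2 * m - 6)) :=
  {inl 2, inl 3, inl 4, inl 5, inr ⟨0, lt_two_mul_sub_six hm Nat.zero_lt_two⟩,
    inr ⟨1, lt_two_mul_sub_six hm Nat.one_lt_two⟩}

variable (hm) in
def centerIndices : Finset (Fin 6 ⊕ Fin (2 * m - 6)) :=
  {inl 5, inr ⟨0, lt_two_mul_sub_six hm Nat.zero_lt_two⟩,
    inr ⟨1, lt_two_mul_sub_six hm Nat.one_lt_two⟩}

theorem lie_inr_inr_eq_zero (hb : IsG2m2Basis hm b) {i j : Fin (2 * m - 6)}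
    (hij : ¬ (2 ≤ (i : ℕ) ∧ (i : ℕ) / 2 = j / 2 ∧ i ≠ j)) : ⁅b (inr i), b (inr j)⁆ = 0 :=
  hb.hYY0 i j (fun h => hij ⟨h.2.1, by omega, by omega⟩)
    (fun h => hij ⟨by omega, by omega, by omega⟩)

theorem lie_inr_inr_eq_or_eq_neg (hb : IsG2m2Basis hm b) {i j : Fin (2 * m - 6)}
    (hi : 2 ≤ (i : ℕ)) (hij : (i : ℕ) / 2 = j / 2) (hne : i ≠ j) :
    ⁅b (inr i), b (inr j)⁆ = b (inl 5) ∨ ⁅b (inr i), b (inr j)⁆ = -b (inl 5) := by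
  have hne' : (i : ℕ) ≠ j := Fin.val_ne_of_ne hne
  rcases Nat.mod_two_eq_zero_or_one i with hpar | hpar
  · exact .inl (hb.hYY1 i j hpar hi (by omega))
  · refine .inr ?_
    rw [← lie_skew, hb.hYY1 j i (by omega) (by omega) (by omega)]

theorem lie_mem_span_derivedIndices (hb : IsG2m2Basis hm b) (i j : Fin 6 ⊕ Fin (2 * m - 6)) :
    ⁅b i, b j⁆ ∈ span R (b '' derivedIndices hm) := by
  set p := span R (b '' derivedIndices hm)
  have hbasis : ∀ k ∈ derivedIndices hm, b k ∈ p := fun k hk =>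
    subset_span (mem_image_of_mem b hk)
  have hswap : ∀ {x y : L}, ⁅y, x⁆ ∈ p → ⁅x, y⁆ ∈ p := fun h => by
    rw [← lie_skew]; exact neg_mem h
  rcases i with i | i <;> rcases j with j | j
  · suffices h : ⁅b (inl i), b (inl j)⁆ ∈ p ∨ ⁅b (inl j), b (inl i)⁆ ∈ p from
      h.elim id hswap
    have hmem := hbasis
    simp only [derivedIndices, Finset.mem_insert, Finset.mem_singleton, forall_eq_or_imp,
      forall_eq] at hmem
    fin_cases i <;> fin_cases j <;>
      simp [hb.h01, hb.h02, hb.h03, hb.h04, hb.h05, hb.h41, hb.h23, hb.h21, hb.h13, hb.h15,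
        hb.h24, hb.h25, hb.h34, hb.h35, hb.h45, hmem]
  · rw [hb.hXY]; exact zero_mem p
  · exact hswap (by rw [hb.hXY]; exact zero_mem p)
  · by_cases hij : 2 ≤ (i : ℕ) ∧ (i : ℕ) / 2 = j / 2 ∧ i ≠ j
    · have h5 : b (inl 5) ∈ p := hbasis _ (by simp [derivedIndices])
      rcases hb.lie_inr_inr_eq_or_eq_neg hij.1 hij.2.1 hij.2.2 with h | h <;> rw [h]
      exacts [h5, neg_mem h5]
    · rw [hb.lie_inr_inr_eq_zero hij]; exact zero_mem p

theorem derivedSeries_one_eq_span (hb : IsG2m2Basis hm b) :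
    (derivedSeries R L 1).toSubmodule = span R (b '' derivedIndices hm) := by
  rw [derivedSeries_one_toSubmodule_eq_span_lie_basis b]
  refine le_antisymm (span_le.2 ?_) (span_mono ?_)
  · rintro _ ⟨⟨i, j⟩, rfl⟩
    exact hb.lie_mem_span_derivedIndices i j
  · rintro _ ⟨k, hk, rfl⟩
    simp only [derivedIndices, Finset.coe_insert, Finset.coe_singleton, mem_insert_iff,
      mem_singleton_iff] at hk
    rcases hk with rfl | rfl | rfl | rfl | rfl | rfl
    exacts [⟨(inl 0, inl 1), hb.h01⟩, ⟨(inl 0, inl 2), hb.h02⟩, ⟨(inl 0, inl 3), hb.h03⟩,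
      ⟨(inl 0, inl 4), hb.h04⟩, ⟨(inl 2, inl 3), hb.h23⟩, ⟨(inl 2, inl 1), hb.h21⟩]

theorem repr_inl_eq_zero_of_mem_center (hb : IsG2m2Basis hm b) {z : L} (hz : z ∈ center R L)
    {j : Fin 6} (hj : j ≠ 5) : b.repr z (inl j) = 0 := by
  by_cases hj0 : j = 0
  · subst hj0
    refine b.repr_eq_zero_of_lie_eq_zero (x := b (inl 2)) (l := inl 3) (hz _) ?_ ?_
    · rw [← lie_skew, hb.h02]; simp
    · rintro (k | k) hk
      · fin_cases k <;> simp_all [hb.h21, hb.h23, hb.h24, hb.h25]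
      · simp [hb.hXY]
  · refine b.repr_eq_zero_of_lie_eq_zero (x := b (inl 0)) (l := inl (j + 1)) (hz _) ?_ ?_
    · fin_cases j <;> simp_all [hb.h01, hb.h02, hb.h03, hb.h04]
    · rintro (k | k) hk
      · fin_cases j <;> fin_cases k <;> simp_all [hb.h01, hb.h02, hb.h03, hb.h04, hb.h05]
      · simp [hb.hXY]

theorem repr_inr_eq_zero_of_mem_center (hb : IsG2m2Basis hm b) {z : L} (hz : z ∈ center R L)
    {i : Fin (2 * m - 6)} (hi : 2 ≤ (i : ℕ)) : b.repr z (inr i) = 0 := by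
  obtain ⟨j, hji, hne⟩ : ∃ j : Fin (2 * m - 6), (j : ℕ) / 2 = i / 2 ∧ (j : ℕ) ≠ i := by
    rcases Nat.mod_two_eq_zero_or_one i with h | h
    · exact ⟨⟨i + 1, by omega⟩, by simp; omega, by simp⟩
    · exact ⟨⟨i - 1, by omega⟩, by simp; omega, by simp; omega⟩
  refine b.repr_eq_zero_of_lie_eq_zero (x := b (inr j)) (l := inl 5) (hz _) ?_ ?_
  · rcases hb.lie_inr_inr_eq_or_eq_neg (by omega) hji (Fin.ne_of_val_ne hne) with h | h <;>
      simp [h]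
  · rintro (k | k) hk
    · rw [← lie_skew, hb.hXY]; simp
    · rw [hb.lie_inr_inr_eq_zero fun h => hk (congrArg inr (Fin.ext (by omega)))]; simp

theorem center_eq_span (hb : IsG2m2Basis hm b) :
    (center R L).toSubmodule = span R (b '' centerIndices hm) := by
  refine le_antisymm (fun z hz => b.mem_span_image.2 fun k hk => ?_) (span_le.2 ?_)
  · by_contra hkc
    refine Finsupp.mem_support_iff.1 hk ?_
    rcases k with j | i
    · exact hb.repr_inl_eq_zero_of_mem_center hz (by rintro rfl; simp [centerIndices] at hkc)
    · refine hb.repr_inr_eq_zero_of_mem_center hz ?_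
      by_contra hi
      simp [centerIndices, Fin.ext_iff] at hkc
      omega
  · rintro _ ⟨k, hk, rfl⟩
    rw [SetLike.mem_coe, LieSubmodule.mem_toSubmodule, mem_center_iff_forall_basis_lie_eq_zero b]
    simp only [centerIndices, Finset.coe_insert, Finset.coe_singleton, mem_insert_iff,
      mem_singleton_iff] at hk
    rcases hk with rfl | rfl | rfl <;> rintro (j | j)
    · fin_cases j <;> simp [hb.h05, hb.h15, hb.h25, hb.h35, hb.h45]
    · rw [← lie_skew, hb.hXY, neg_zero]
    · exact hb.hXY _ _
    · exact hb.lie_inr_inr_eq_zero (by simp; omega)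
    · exact hb.hXY _ _
    · exact hb.lie_inr_inr_eq_zero (by simp; omega)

end IsG2m2Basis

/-- For the `2m`-dimensional Lie algebra `g_{2m}^2` (`m ≥ 4`; basis
`X_1,...,X_6, Y_1,...,Y_{2m-6}`; nonzero brackets `⁅X_1,X_j⁆ = X_{j+1}` (`j = 2,3,4,5`),
`⁅X_5,X_2⁆ = ⁅X_3,X_4⁆ = Y_1`, `⁅X_3,X_2⁆ = Y_2`, `⁅Y_{2t-1},Y_{2t}⁆ = X_6` for
`2 ≤ t ≤ m-3`), the derived algebra has dimension `6` and is spanned by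
`X_3, X_4, X_5, X_6, Y_1, Y_2`, and the center has dimension `3`. -/
theorem g2m_2_derived_and_center (m : ℕ) (hm : 4 ≤ m) (g : Type*) [LieRing g]
    [LieAlgebra ℂ g] (b : Module.Basis (Fin 6 ⊕ Fin (2 * m - 6)) ℂ g)
    (h01 : ⁅b (Sum.inl 0), b (Sum.inl 1)⁆ = b (Sum.inl 2))
    (h02 : ⁅b (Sum.inl 0), b (Sum.inl 2)⁆ = b (Sum.inl 3))
    (h03 : ⁅b (Sum.inl 0), b (Sum.inl 3)⁆ = b (Sum.inl 4))
    (h04 : ⁅b (Sum.inl 0), b (Sum.inl 4)⁆ = b (Sum.inl 5))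
    (h05 : ⁅b (Sum.inl 0), b (Sum.inl 5)⁆ = 0)
    (h41 : ⁅b (Sum.inl 4), b (Sum.inl 1)⁆ = b (Sum.inr ⟨0, by omega⟩))
    (h23 : ⁅b (Sum.inl 2), b (Sum.inl 3)⁆ = b (Sum.inr ⟨0, by omega⟩))
    (h21 : ⁅b (Sum.inl 2), b (Sum.inl 1)⁆ = b (Sum.inr ⟨1, by omega⟩))
    (h13 : ⁅b (Sum.inl 1), b (Sum.inl 3)⁆ = 0)
    (h15 : ⁅b (Sum.inl 1), b (Sum.inl 5)⁆ = 0)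
    (h24 : ⁅b (Sum.inl 2), b (Sum.inl 4)⁆ = 0)
    (h25 : ⁅b (Sum.inl 2), b (Sum.inl 5)⁆ = 0)
    (h34 : ⁅b (Sum.inl 3), b (Sum.inl 4)⁆ = 0)
    (h35 : ⁅b (Sum.inl 3), b (Sum.inl 5)⁆ = 0)
    (h45 : ⁅b (Sum.inl 4), b (Sum.inl 5)⁆ = 0)
    (hXY : ∀ (j : Fin 6) (i : Fin (2 * m - 6)), ⁅b (Sum.inl j), b (Sum.inr i)⁆ = 0)
    (hYY1 : ∀ i j : Fin (2 * m - 6), (i : ℕ) % 2 = 0 → 2 ≤ (i : ℕ) →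
      (j : ℕ) = (i : ℕ) + 1 → ⁅b (Sum.inr i), b (Sum.inr j)⁆ = b (Sum.inl 5))
    (hYY0 : ∀ i j : Fin (2 * m - 6),
      ¬ ((i : ℕ) % 2 = 0 ∧ 2 ≤ (i : ℕ) ∧ (j : ℕ) = (i : ℕ) + 1) →
      ¬ ((j : ℕ) % 2 = 0 ∧ 2 ≤ (j : ℕ) ∧ (i : ℕ) = (j : ℕ) + 1) →
      ⁅b (Sum.inr i), b (Sum.inr j)⁆ = 0) :
    (LieAlgebra.derivedSeries ℂ g 1).toSubmodule =
      Submodule.span ℂ {b (Sum.inl 2), b (Sum.inl 3), b (Sum.inl 4), b (Sum.inl 5),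
        b (Sum.inr ⟨0, by omega⟩), b (Sum.inr ⟨1, by omega⟩)} ∧
    Module.finrank ℂ (LieAlgebra.derivedSeries ℂ g 1).toSubmodule = 6 ∧
    Module.finrank ℂ (LieAlgebra.center ℂ g).toSubmodule = 3 := by
  have hb : IsG2m2Basis hm b := ⟨h01, h02, h03, h04, h05, h41, h23, h21, h13, h15, h24, h25,
    h34, h35, h45, hXY, hYY1, hYY0⟩
  refine ⟨?_, ?_, ?_⟩
  · rw [hb.derivedSeries_one_eq_span]
    simp [IsG2m2Basis.derivedIndices, image_insert_eq]
  · rw [hb.derivedSeries_one_eq_span, b.finrank_span_image]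
    rfl
  · rw [hb.center_eq_span, b.finrank_span_image]
    rfl
end

section
/- The Lie algebras g_8^{6} and g_8^{8} are not isomorphic, where g_8^6 has basis X_1,...,X_6,Y_1,Y_2 with nonzero brackets [X_1,X_j]=X_{j+1} (j=2,...,5), [X_3,X_2]=Y_1, [Y_1,X_3]=X_6, [Y_1,X_2]=X_5+X_6, [Y_2,X_2]=X_6, and g_8^8 has the same brackets except [Y_1,X_2]=X_5 (without the X_6 term). -/
/-!
Transport an isomorphism `e : g_8^6 ≃ g_8^8` to coordinates in `g_8^8`; let `u, v` be the images
of `X₁, X₂`, with `X_i`-coordinates `u_i, v_i`, and `p = u₁ v₂ - v₁ u₂`. The images of `X₃` and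
`Y₁` lie in the span of `X₃, …, X₆, Y₁`, so the relation `⁅Y₁, X₃⁆ = X₆` forces
`e X₆ = p² v₂ X₆`. If this were nonzero, `⁅X₃, X₄⁆ = 0` and `⁅X₂, X₄⁆ = 0` would give `u₂ = 0`
and `v₁ = 0`; then `e X₆ = ⁅u, e X₅⁆` and the `X₆`-coordinate of `⁅Y₁, X₂⁆ = X₅ + X₆` read
`u₁⁴ v₂ = u₁² v₂³` and `u₁ v₂² v₃ = u₁³ v₃ + u₁² v₂³`, whence `u₁³ v₂⁴ = 0`, a contradiction.
-/
theorem Module.Basis.lie_eq_sum_sum_lt {ι R L : Type*} [Fintype ι] [LinearOrder ι] [CommRing R]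
    [LieRing L] [LieAlgebra R L] (b : Module.Basis ι R L) (x y : L) :
    ⁅x, y⁆ = ∑ i, ∑ j, if i < j then
      (b.repr x i * b.repr y j - b.repr x j * b.repr y i) • ⁅b i, b j⁆ else 0 := by
  have expand : ⁅x, y⁆ = ∑ i, ∑ j, (b.repr x i * b.repr y j) • ⁅b i, b j⁆ := by
    conv_lhs => rw [← b.sum_repr x, ← b.sum_repr y]
    simp only [sum_lie_sum, smul_lie, lie_smul, smul_smul, mul_comm (b.repr y _)]
  have split : ∀ i j, (b.repr x i * b.repr y j) • ⁅b i, b j⁆ =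
      (if i < j then (b.repr x i * b.repr y j) • ⁅b i, b j⁆ else 0) -
      (if j < i then (b.repr x i * b.repr y j) • ⁅b j, b i⁆ else 0) := by
    intro i j
    rcases lt_trichotomy i j with h | rfl | h
    · rw [if_pos h, if_neg h.not_gt, sub_zero]
    · rw [if_neg (lt_irrefl i), lie_self, smul_zero, sub_zero]
    · rw [if_neg h.not_gt, if_pos h, zero_sub, ← smul_neg, lie_skew]
  rw [expand, Finset.sum_congr rfl fun i _ => Finset.sum_congr rfl fun j _ => split i j]
  simp only [Finset.sum_sub_distrib]
  rw [Finset.sum_comm (f := fun i j => if j < i then _ else _), ← Finset.sum_sub_distrib]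
  refine Finset.sum_congr rfl fun i _ => ?_
  rw [← Finset.sum_sub_distrib]
  refine Finset.sum_congr rfl fun j _ => ?_
  split_ifs <;> simp only [sub_smul, sub_zero]

namespace G88

/-- The bracket of `g_8^8` on coordinates with respect to `X₁, …, X₆, Y₁, Y₂`
(indices `0, …, 7`). -/
def bracket {R : Type*} [CommRing R] (x y : Fin 8 → R) : Fin 8 → R :=
  ![0, 0, x 0 * y 1 - y 0 * x 1, x 0 * y 2 - y 0 * x 2,
    x 0 * y 3 - y 0 * x 3 + x 6 * y 1 - y 6 * x 1,
    x 0 * y 4 - y 0 * x 4 + x 6 * y 2 - y 6 * x 2 + x 7 * y 1 - y 7 * x 1,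
    x 2 * y 1 - y 2 * x 1, 0]

theorem equivFun_lie {R L : Type*} [CommRing R] [LieRing L] [LieAlgebra R L]
    (b : Module.Basis (Fin 8) R L)
    (h01 : ⁅b 0, b 1⁆ = b 2) (h02 : ⁅b 0, b 2⁆ = b 3) (h03 : ⁅b 0, b 3⁆ = b 4)
    (h04 : ⁅b 0, b 4⁆ = b 5) (h05 : ⁅b 0, b 5⁆ = 0) (h06 : ⁅b 0, b 6⁆ = 0)
    (h07 : ⁅b 0, b 7⁆ = 0)
    (h21 : ⁅b 2, b 1⁆ = b 6) (h62 : ⁅b 6, b 2⁆ = b 5) (h61 : ⁅b 6, b 1⁆ = b 4)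
    (h71 : ⁅b 7, b 1⁆ = b 5)
    (h13 : ⁅b 1, b 3⁆ = 0) (h14 : ⁅b 1, b 4⁆ = 0) (h15 : ⁅b 1, b 5⁆ = 0)
    (h23 : ⁅b 2, b 3⁆ = 0) (h24 : ⁅b 2, b 4⁆ = 0) (h25 : ⁅b 2, b 5⁆ = 0)
    (h27 : ⁅b 2, b 7⁆ = 0)
    (h34 : ⁅b 3, b 4⁆ = 0) (h35 : ⁅b 3, b 5⁆ = 0) (h36 : ⁅b 3, b 6⁆ = 0)
    (h37 : ⁅b 3, b 7⁆ = 0)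
    (h45 : ⁅b 4, b 5⁆ = 0) (h46 : ⁅b 4, b 6⁆ = 0) (h47 : ⁅b 4, b 7⁆ = 0)
    (h56 : ⁅b 5, b 6⁆ = 0) (h57 : ⁅b 5, b 7⁆ = 0) (h67 : ⁅b 6, b 7⁆ = 0) (x y : L) :
    b.equivFun ⁅x, y⁆ = bracket (b.equivFun x) (b.equivFun y) := by
  apply b.equivFun.symm.injective
  rw [LinearEquiv.symm_apply_apply, b.equivFun_symm_apply, b.lie_eq_sum_sum_lt]
  simp only [Fin.sum_univ_eight, Fin.reduceLT, if_true, if_false, bracket,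
    Module.Basis.equivFun_apply, Matrix.cons_val]
  rw [← lie_skew (b 1) (b 2), ← lie_skew (b 1) (b 6), ← lie_skew (b 1) (b 7),
    ← lie_skew (b 2) (b 6)]
  rw [h01, h02, h03, h04, h05, h06, h07, h21, h62, h61, h71, h13, h14, h15, h23, h24, h25, h27,
    h34, h35, h36, h37, h45, h46, h47, h56, h57, h67]
  module

variable {R : Type*} [CommRing R] [NoZeroDivisors R]

/-- `u, v, w₂, …, w₅, y` stand for the images of `X₁, X₂, X₃, …, X₆, Y₁`. -/
theorem eq_zero_of_g86_relations {u v w₂ w₃ w₄ w₅ y : Fin 8 → R}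
    (h₂ : bracket u v = w₂) (h₃ : bracket u w₂ = w₃) (h₄ : bracket u w₃ = w₄)
    (h₅ : bracket u w₄ = w₅) (hy : bracket w₂ v = y) (hyw₂ : bracket y w₂ = w₅)
    (hyv : bracket y v = w₄ + w₅) (hvw₃ : bracket v w₃ = 0) (hw₂w₃ : bracket w₂ w₃ = 0) :
    w₅ = 0 := by
  subst h₂ h₃ h₄ hy
  set p := u 0 * v 1 - v 0 * u 1 with hp
  -- `y` and `w₂` have no `X₁, X₂, Y₂`-components, and on such vectors only the `X₆`-component of
  -- the bracket survives.
  have hw₅ : w₅ = Pi.single 5 (p ^ 2 * v 1) := by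
    rw [← hyw₂]
    ext k
    fin_cases k <;> simp [bracket]
    ring
  suffices p ^ 2 * v 1 = 0 by rw [hw₅, this, Pi.single_zero]
  by_contra hne
  obtain ⟨hp0, hv1⟩ : p ≠ 0 ∧ v 1 ≠ 0 := by simpa [not_or] using hne
  have hu1 : u 1 = 0 := by
    have h : u 1 * p ^ 2 = 0 := by
      have := congrFun hw₂w₃ 5
      simp only [bracket, Matrix.cons_val, Pi.zero_apply] at this
      linear_combination this
    simpa [hp0] using h
  have hp' : p = u 0 * v 1 := by rw [hp, hu1, mul_zero, sub_zero]
  have hu0 : u 0 ≠ 0 := left_ne_zero_of_mul (hp' ▸ hp0)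
  have hv0 : v 0 = 0 := by
    have h : v 0 * u 0 * p = 0 := by
      have := congrFun hvw₃ 4
      simp only [bracket, Matrix.cons_val, Pi.zero_apply, hu1] at this
      rw [hp']
      linear_combination this
    simpa [hu0, hp0] using h
  have h₅₅ : u 0 ^ 4 * v 1 = p ^ 2 * v 1 := by
    have := congrFun h₅ 5
    simp only [bracket, Matrix.cons_val, hu1, hv0, hw₅, Pi.single_eq_same] at this
    linear_combination this
  have h₆₁ : u 0 * v 1 ^ 2 * v 2 = u 0 ^ 3 * v 2 + p ^ 2 * v 1 := by
    have := congrFun hyv 5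
    simp only [bracket, Matrix.cons_val, Pi.add_apply, hu1, hv0, hw₅,
      Pi.single_eq_same] at this
    linear_combination this
  rw [hp'] at h₅₅ h₆₁
  have : u 0 ^ 3 * v 1 ^ 4 = 0 := by linear_combination -(v 2 * h₅₅ + u 0 * v 1 * h₆₁)
  exact mul_ne_zero (pow_ne_zero 3 hu0) (pow_ne_zero 4 hv1) this

end G88

theorem g8_6_not_iso_g8_8_general (g g' : Type*) [LieRing g] [LieAlgebra ℂ g]
    [LieRing g'] [LieAlgebra ℂ g'] (b : Module.Basis (Fin 8) ℂ g) (b' : Module.Basis (Fin 8) ℂ g')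
    (h01 : ⁅b 0, b 1⁆ = b 2) (h02 : ⁅b 0, b 2⁆ = b 3) (h03 : ⁅b 0, b 3⁆ = b 4)
    (h04 : ⁅b 0, b 4⁆ = b 5)
    (h21 : ⁅b 2, b 1⁆ = b 6) (h62 : ⁅b 6, b 2⁆ = b 5) (h61 : ⁅b 6, b 1⁆ = b 4 + b 5)
    (h13 : ⁅b 1, b 3⁆ = 0) (h23 : ⁅b 2, b 3⁆ = 0)
    (h01' : ⁅b' 0, b' 1⁆ = b' 2) (h02' : ⁅b' 0, b' 2⁆ = b' 3) (h03' : ⁅b' 0, b' 3⁆ = b' 4)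
    (h04' : ⁅b' 0, b' 4⁆ = b' 5) (h05' : ⁅b' 0, b' 5⁆ = 0) (h06' : ⁅b' 0, b' 6⁆ = 0)
    (h07' : ⁅b' 0, b' 7⁆ = 0)
    (h21' : ⁅b' 2, b' 1⁆ = b' 6) (h62' : ⁅b' 6, b' 2⁆ = b' 5) (h61' : ⁅b' 6, b' 1⁆ = b' 4)
    (h71' : ⁅b' 7, b' 1⁆ = b' 5)
    (h13' : ⁅b' 1, b' 3⁆ = 0) (h14' : ⁅b' 1, b' 4⁆ = 0) (h15' : ⁅b' 1, b' 5⁆ = 0)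
    (h23' : ⁅b' 2, b' 3⁆ = 0) (h24' : ⁅b' 2, b' 4⁆ = 0) (h25' : ⁅b' 2, b' 5⁆ = 0)
    (h27' : ⁅b' 2, b' 7⁆ = 0)
    (h34' : ⁅b' 3, b' 4⁆ = 0) (h35' : ⁅b' 3, b' 5⁆ = 0) (h36' : ⁅b' 3, b' 6⁆ = 0)
    (h37' : ⁅b' 3, b' 7⁆ = 0)
    (h45' : ⁅b' 4, b' 5⁆ = 0) (h46' : ⁅b' 4, b' 6⁆ = 0) (h47' : ⁅b' 4, b' 7⁆ = 0)
    (h56' : ⁅b' 5, b' 6⁆ = 0) (h57' : ⁅b' 5, b' 7⁆ = 0) (h67' : ⁅b' 6, b' 7⁆ = 0) :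
    ¬ Nonempty (g ≃ₗ⁅ℂ⁆ g') := by
  rintro ⟨e⟩
  let φ : g ≃ₗ[ℂ] (Fin 8 → ℂ) := e.toLinearEquiv.trans b'.equivFun
  have hφ (x y : g) : φ ⁅x, y⁆ = G88.bracket (φ x) (φ y) := by
    simp only [φ, LinearEquiv.trans_apply, LieEquiv.coe_toLinearEquiv, LieEquiv.map_lie]
    exact G88.equivFun_lie b' h01' h02' h03' h04' h05' h06' h07' h21' h62' h61' h71' h13' h14'
      h15' h23' h24' h25' h27' h34' h35' h36' h37' h45' h46' h47' h56' h57' h67' _ _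
  have hX₆ : φ (b 5) = 0 := G88.eq_zero_of_g86_relations (u := φ (b 0)) (v := φ (b 1))
    (by rw [← hφ, h01]) (by rw [← hφ, h02]) (by rw [← hφ, h03]) (by rw [← hφ, h04])
    (by rw [← hφ, h21]) (by rw [← hφ, h62]) (by rw [← hφ, h61, map_add])
    (by rw [← hφ, h13, map_zero]) (by rw [← hφ, h23, map_zero])
  exact b.ne_zero 5 (φ.map_eq_zero_iff.mp hX₆)

/-- The 8-dimensional Lie algebras `g_8^6` and `g_8^8` are not isomorphic: they share
the brackets `⁅X_1,X_j⁆ = X_{j+1}` (`j = 2,3,4,5`), `⁅X_3,X_2⁆ = Y_1`, `⁅Y_1,X_3⁆ = X_6`,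
`⁅Y_2,X_2⁆ = X_6`, but `⁅Y_1,X_2⁆ = X_5 + X_6` in `g_8^6` while `⁅Y_1,X_2⁆ = X_5` in
`g_8^8`. -/
theorem g8_6_not_iso_g8_8 (g g' : Type*) [LieRing g] [LieAlgebra ℂ g]
    [LieRing g'] [LieAlgebra ℂ g'] (b : Module.Basis (Fin 8) ℂ g) (b' : Module.Basis (Fin 8) ℂ g')
    (h01 : ⁅b 0, b 1⁆ = b 2) (h02 : ⁅b 0, b 2⁆ = b 3) (h03 : ⁅b 0, b 3⁆ = b 4)
    (h04 : ⁅b 0, b 4⁆ = b 5) (h05 : ⁅b 0, b 5⁆ = 0) (h06 : ⁅b 0, b 6⁆ = 0)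
    (h07 : ⁅b 0, b 7⁆ = 0)
    (h21 : ⁅b 2, b 1⁆ = b 6) (h62 : ⁅b 6, b 2⁆ = b 5) (h61 : ⁅b 6, b 1⁆ = b 4 + b 5)
    (h71 : ⁅b 7, b 1⁆ = b 5)
    (h13 : ⁅b 1, b 3⁆ = 0) (h14 : ⁅b 1, b 4⁆ = 0) (h15 : ⁅b 1, b 5⁆ = 0)
    (h23 : ⁅b 2, b 3⁆ = 0) (h24 : ⁅b 2, b 4⁆ = 0) (h25 : ⁅b 2, b 5⁆ = 0)
    (h27 : ⁅b 2, b 7⁆ = 0)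
    (h34 : ⁅b 3, b 4⁆ = 0) (h35 : ⁅b 3, b 5⁆ = 0) (h36 : ⁅b 3, b 6⁆ = 0)
    (h37 : ⁅b 3, b 7⁆ = 0)
    (h45 : ⁅b 4, b 5⁆ = 0) (h46 : ⁅b 4, b 6⁆ = 0) (h47 : ⁅b 4, b 7⁆ = 0)
    (h56 : ⁅b 5, b 6⁆ = 0) (h57 : ⁅b 5, b 7⁆ = 0) (h67 : ⁅b 6, b 7⁆ = 0)
    (h01' : ⁅b' 0, b' 1⁆ = b' 2) (h02' : ⁅b' 0, b' 2⁆ = b' 3) (h03' : ⁅b' 0, b' 3⁆ = b' 4)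
    (h04' : ⁅b' 0, b' 4⁆ = b' 5) (h05' : ⁅b' 0, b' 5⁆ = 0) (h06' : ⁅b' 0, b' 6⁆ = 0)
    (h07' : ⁅b' 0, b' 7⁆ = 0)
    (h21' : ⁅b' 2, b' 1⁆ = b' 6) (h62' : ⁅b' 6, b' 2⁆ = b' 5) (h61' : ⁅b' 6, b' 1⁆ = b' 4)
    (h71' : ⁅b' 7, b' 1⁆ = b' 5)
    (h13' : ⁅b' 1, b' 3⁆ = 0) (h14' : ⁅b' 1, b' 4⁆ = 0) (h15' : ⁅b' 1, b' 5⁆ = 0)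
    (h23' : ⁅b' 2, b' 3⁆ = 0) (h24' : ⁅b' 2, b' 4⁆ = 0) (h25' : ⁅b' 2, b' 5⁆ = 0)
    (h27' : ⁅b' 2, b' 7⁆ = 0)
    (h34' : ⁅b' 3, b' 4⁆ = 0) (h35' : ⁅b' 3, b' 5⁆ = 0) (h36' : ⁅b' 3, b' 6⁆ = 0)
    (h37' : ⁅b' 3, b' 7⁆ = 0)
    (h45' : ⁅b' 4, b' 5⁆ = 0) (h46' : ⁅b' 4, b' 6⁆ = 0) (h47' : ⁅b' 4, b' 7⁆ = 0)
    (h56' : ⁅b' 5, b' 6⁆ = 0) (h57' : ⁅b' 5, b' 7⁆ = 0) (h67' : ⁅b' 6, b' 7⁆ = 0) :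
    ¬ Nonempty (g ≃ₗ⁅ℂ⁆ g') :=
  g8_6_not_iso_g8_8_general g g' b b' h01 h02 h03 h04 h21 h62 h61 h13 h23 h01' h02' h03' h04' h05'
    h06' h07' h21' h62' h61' h71' h13' h14' h15' h23' h24' h25' h27' h34' h35' h36' h37' h45' h46'
    h47' h56' h57' h67'
end
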